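/- arXiv:1907.07447 — 4 statements merged into one kernel-verified Lean document; each statement's English description precedes it below -/
import Mathlib

section
/- Under the stated hypotheses, the monic MVOPs satisfy the lowering relation: for every n ≥ 0 and every x ∈ ℝ, P'(x,n) + P(x,n)A = A·P(x,n) + Σ_{j=1}^{min(n,k−1)} A_{−j}(n) P(x,n−j), where P' denotes the derivative in x and A_{−j}(n) := ⟨v'(·)P(·,n), P(·,n−j)⟩ ℋ(n−j)⁻¹ ∈ M_N(ℂ). In particular the difference operator realizing P·𝒟 has order at most k−1 in the lowering direction. -/
open MeasureTheory Matrix Finset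
open scoped ComplexOrder

/-- Entrywise integral of a matrix-valued function on `ℝ`. -/
noncomputable def matInt (N : ℕ) (F : ℝ → Matrix (Fin N) (Fin N) ℂ) :
    Matrix (Fin N) (Fin N) ℂ :=
  Matrix.of fun i j => ∫ y : ℝ, F y i j

/-- Entrywise derivative of a matrix-valued function on `ℝ`. -/
noncomputable def matDeriv (N : ℕ) (F : ℝ → Matrix (Fin N) (Fin N) ℂ) (x : ℝ) :
    Matrix (Fin N) (Fin N) ℂ :=
  Matrix.of fun i j => deriv (fun y => F y i j) x

/-- `F` is (the evaluation of) a matrix polynomial. -/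
def IsMatPoly (N : ℕ) (F : ℝ → Matrix (Fin N) (Fin N) ℂ) : Prop :=
  ∃ (d : ℕ) (c : ℕ → Matrix (Fin N) (Fin N) ℂ),
    ∀ x : ℝ, F x = ∑ k ∈ Finset.range (d + 1), ((x : ℂ) ^ k) • c k

/-- `F` is a matrix polynomial of degree `n` with leading coefficient the identity. -/
def IsMonicMatPoly (N n : ℕ) (F : ℝ → Matrix (Fin N) (Fin N) ℂ) : Prop :=
  ∃ c : ℕ → Matrix (Fin N) (Fin N) ℂ, c n = 1 ∧
    ∀ x : ℝ, F x = ∑ k ∈ Finset.range (n + 1), ((x : ℂ) ^ k) • c k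

/-- The matrix-valued inner product `⟨H, G⟩ = ∫ H(y) W(y) G(y)* dy`. -/
noncomputable def matIP (N : ℕ) (W H G : ℝ → Matrix (Fin N) (Fin N) ℂ) :
    Matrix (Fin N) (Fin N) ℂ :=
  matInt N fun y => H y * W y * (G y)ᴴ

/-!
`Q := P(·,n)' + P(·,n) A − A P(·,n)` has degree `< n`, because the leading coefficient `I` of
`P(·,n)` commutes with `A`; hence `Q = ∑_{m<n} B_m P(·,m)` with `B_m = ⟨Q, P(·,m)⟩ ℋ(m)⁻¹`.
Adjointness of `𝒟` turns `⟨Q, P(·,m)⟩` into `⟨P(·,n), v' P(·,m) − P(·,m) 𝒟⟩ = ⟨v' P(·,n), P(·,m)⟩`,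
since `P(·,m) 𝒟` has degree `≤ m < n`. Moving `v'` back to the right, this vanishes as soon as
`deg (v' P(·,m)) ≤ m + k − 1 < n`, which leaves only `m = n − j` with `1 ≤ j ≤ k − 1`.
-/

section

variable {N : ℕ}

def matPolyDegreeLT (N d : ℕ) : Submodule ℂ (ℝ → Matrix (Fin N) (Fin N) ℂ) where
  carrier := {F | ∃ c : ℕ → Matrix (Fin N) (Fin N) ℂ,
    ∀ x : ℝ, F x = ∑ k ∈ range d, ((x : ℂ) ^ k) • c k}
  add_mem' := by
    rintro F G ⟨c, hc⟩ ⟨c', hc'⟩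
    exact ⟨c + c', fun x => by simp [hc x, hc' x, smul_add, sum_add_distrib]⟩
  zero_mem' := ⟨0, fun x => by simp⟩
  smul_mem' := by
    rintro a F ⟨c, hc⟩
    exact ⟨a • c, fun x => by simp [hc x, smul_sum, smul_comm a]⟩

lemma matPolyDegreeLT_mono {d e : ℕ} (h : d ≤ e) :
    matPolyDegreeLT N d ≤ matPolyDegreeLT N e := by
  rintro F ⟨c, hc⟩
  refine ⟨fun k => if k < d then c k else 0, fun x => ?_⟩
  have htail : ∑ k ∈ Ico d e, ((x : ℂ) ^ k) • (if k < d then c k else 0) = 0 :=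
    sum_eq_zero fun k hk => by simp [(mem_Ico.1 hk).1.not_gt]
  rw [← sum_range_add_sum_Ico _ h, htail, add_zero, hc x]
  exact sum_congr rfl fun k hk => by simp [mem_range.1 hk]

lemma IsMonicMatPoly.mem_matPolyDegreeLT {n : ℕ} {F : ℝ → Matrix (Fin N) (Fin N) ℂ}
    (hF : IsMonicMatPoly N n F) : F ∈ matPolyDegreeLT N (n + 1) :=
  let ⟨c, _, hc⟩ := hF
  ⟨c, hc⟩

lemma isMatPoly_of_mem_matPolyDegreeLT {d : ℕ} {F : ℝ → Matrix (Fin N) (Fin N) ℂ}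
    (hF : F ∈ matPolyDegreeLT N d) : IsMatPoly N F :=
  ⟨d, matPolyDegreeLT_mono d.le_succ hF⟩

lemma IsMonicMatPoly.isMatPoly {n : ℕ} {F : ℝ → Matrix (Fin N) (Fin N) ℂ}
    (hF : IsMonicMatPoly N n F) : IsMatPoly N F :=
  isMatPoly_of_mem_matPolyDegreeLT hF.mem_matPolyDegreeLT

lemma mul_left_mem_matPolyDegreeLT {d : ℕ} (C : Matrix (Fin N) (Fin N) ℂ)
    {F : ℝ → Matrix (Fin N) (Fin N) ℂ} (hF : F ∈ matPolyDegreeLT N d) :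
    (fun x => C * F x) ∈ matPolyDegreeLT N d := by
  obtain ⟨c, hc⟩ := hF
  exact ⟨fun k => C * c k, fun x => by simp [hc x, mul_sum]⟩

lemma IsMatPoly.mul_left {F : ℝ → Matrix (Fin N) (Fin N) ℂ} (hF : IsMatPoly N F)
    (C : Matrix (Fin N) (Fin N) ℂ) : IsMatPoly N fun x => C * F x :=
  let ⟨d, hd⟩ := hF
  ⟨d, mul_left_mem_matPolyDegreeLT C hd⟩

lemma mul_right_mem_matPolyDegreeLT {d : ℕ} (C : Matrix (Fin N) (Fin N) ℂ)
    {F : ℝ → Matrix (Fin N) (Fin N) ℂ} (hF : F ∈ matPolyDegreeLT N d) :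
    (fun x => F x * C) ∈ matPolyDegreeLT N d := by
  obtain ⟨c, hc⟩ := hF
  exact ⟨fun k => c k * C, fun x => by simp [hc x, sum_mul]⟩

lemma ofReal_pow_smul_mem_matPolyDegreeLT {d : ℕ} (l : ℕ) {F : ℝ → Matrix (Fin N) (Fin N) ℂ}
    (hF : F ∈ matPolyDegreeLT N d) :
    (fun x : ℝ => ((x : ℂ) ^ l) • F x) ∈ matPolyDegreeLT N (d + l) := by
  obtain ⟨c, hc⟩ := hF
  refine ⟨fun k => if l ≤ k then c (k - l) else 0, fun x => ?_⟩
  dsimp only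
  have hlow : ∑ k ∈ range l, ((x : ℂ) ^ k) • (if l ≤ k then c (k - l) else 0) = 0 :=
    sum_eq_zero fun k hk => by simp [(mem_range.1 hk).not_ge]
  rw [hc x, smul_sum, add_comm, sum_range_add, hlow, zero_add]
  exact sum_congr rfl fun k _ => by simp [smul_smul, pow_add]

lemma polynomial_eval_smul_mem_matPolyDegreeLT {d : ℕ} (p : Polynomial ℝ)
    {F : ℝ → Matrix (Fin N) (Fin N) ℂ} (hF : F ∈ matPolyDegreeLT N d) :
    (fun x => ((p.eval x : ℝ) : ℂ) • F x) ∈ matPolyDegreeLT N (d + p.natDegree) := by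
  have hsum : (fun x => ((p.eval x : ℝ) : ℂ) • F x) =
      ∑ l ∈ range (p.natDegree + 1), (p.coeff l : ℂ) • fun x : ℝ => ((x : ℂ) ^ l) • F x := by
    funext x
    simp only [Finset.sum_apply, Pi.smul_apply, smul_smul, p.eval_eq_sum_range,
      Complex.ofReal_sum, Complex.ofReal_mul, Complex.ofReal_pow, sum_smul, mul_comm]
  rw [hsum]
  refine Submodule.sum_mem _ fun l hl => Submodule.smul_mem _ _ ?_
  exact matPolyDegreeLT_mono (by have := mem_range.1 hl; omega)
    (ofReal_pow_smul_mem_matPolyDegreeLT l hF)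

lemma matDeriv_mem_matPolyDegreeLT {d : ℕ} {F : ℝ → Matrix (Fin N) (Fin N) ℂ}
    (hF : F ∈ matPolyDegreeLT N (d + 1)) : matDeriv N F ∈ matPolyDegreeLT N d := by
  obtain ⟨c, hc⟩ := hF
  refine ⟨fun k => ((k + 1 : ℕ) : ℂ) • c (k + 1), fun x => ?_⟩
  ext i j
  have hentry : HasDerivAt (fun y : ℝ => F y i j)
      (∑ k ∈ range (d + 1), ((k : ℂ) * (x : ℂ) ^ (k - 1)) * c k i j) x := by
    simp only [hc, Matrix.sum_apply, Matrix.smul_apply, smul_eq_mul]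
    refine HasDerivAt.fun_sum fun k _ => ?_
    simpa using ((hasDerivAt_pow k x).ofReal_comp).mul_const (c k i j)
  rw [matDeriv, Matrix.of_apply, hentry.deriv, sum_range_succ', Matrix.sum_apply]
  simp only [CharP.cast_eq_zero, zero_mul, add_zero, Nat.add_sub_cancel, Matrix.smul_apply,
    smul_eq_mul, Nat.cast_add, Nat.cast_one]
  exact sum_congr rfl fun k _ => by ring

lemma IsMonicMatPoly.mul_sub_mul_mem_matPolyDegreeLT {n : ℕ} {F : ℝ → Matrix (Fin N) (Fin N) ℂ}
    (hF : IsMonicMatPoly N n F) (A : Matrix (Fin N) (Fin N) ℂ) :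
    (fun x => F x * A - A * F x) ∈ matPolyDegreeLT N n := by
  obtain ⟨c, hcn, hc⟩ := hF
  refine ⟨fun k => c k * A - A * c k, fun x => ?_⟩
  dsimp only
  rw [hc x, sum_mul, mul_sum, ← sum_sub_distrib, sum_range_succ]
  simp only [smul_mul_assoc, mul_smul_comm, ← smul_sub, hcn, one_mul, mul_one, sub_self,
    add_zero]

lemma IsMonicMatPoly.exists_sub_mul_mem_matPolyDegreeLT {d : ℕ}
    {F P : ℝ → Matrix (Fin N) (Fin N) ℂ} (hP : IsMonicMatPoly N d P)
    (hF : F ∈ matPolyDegreeLT N (d + 1)) :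
    ∃ C, (fun x => F x - C * P x) ∈ matPolyDegreeLT N d := by
  obtain ⟨cP, hcPd, hcP⟩ := hP
  obtain ⟨c, hc⟩ := hF
  refine ⟨c d, fun k => c k - c d * cP k, fun x => ?_⟩
  dsimp only
  rw [hc x, hcP x, mul_sum, ← sum_sub_distrib, sum_range_succ]
  simp only [mul_smul_comm, ← smul_sub, hcPd, mul_one, sub_self, add_zero]

lemma exists_eq_sum_mul_of_mem_matPolyDegreeLT {P : ℕ → ℝ → Matrix (Fin N) (Fin N) ℂ}
    (hP : ∀ n, IsMonicMatPoly N n (P n)) {d : ℕ} {F : ℝ → Matrix (Fin N) (Fin N) ℂ}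
    (hF : F ∈ matPolyDegreeLT N d) :
    ∃ B : ℕ → Matrix (Fin N) (Fin N) ℂ, ∀ x, F x = ∑ m ∈ range d, B m * P m x := by
  induction d generalizing F with
  | zero =>
    obtain ⟨c, hc⟩ := hF
    exact ⟨0, fun x => by simpa using hc x⟩
  | succ d ih =>
    obtain ⟨C, hC⟩ := (hP d).exists_sub_mul_mem_matPolyDegreeLT hF
    obtain ⟨B, hB⟩ := ih hC
    refine ⟨Function.update B d C, fun x => ?_⟩
    rw [sum_range_succ, Function.update_self, ← sub_eq_iff_eq_add, hB x]
    exact sum_congr rfl fun m hm => by rw [Function.update_of_ne (mem_range.1 hm).ne]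

lemma IsMonicMatPoly.deriv_add_mul_mem_matPolyDegreeLT {n : ℕ}
    {F : ℝ → Matrix (Fin N) (Fin N) ℂ} (hF : IsMonicMatPoly N n F)
    (A : Matrix (Fin N) (Fin N) ℂ) :
    (fun x => matDeriv N F x + F x * A) ∈ matPolyDegreeLT N (n + 1) :=
  add_mem (matPolyDegreeLT_mono n.le_succ (matDeriv_mem_matPolyDegreeLT hF.mem_matPolyDegreeLT))
    (mul_right_mem_matPolyDegreeLT A hF.mem_matPolyDegreeLT)

lemma IsMonicMatPoly.deriv_add_mul_sub_mul_mem_matPolyDegreeLT {n : ℕ}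
    {F : ℝ → Matrix (Fin N) (Fin N) ℂ} (hF : IsMonicMatPoly N n F)
    (A : Matrix (Fin N) (Fin N) ℂ) :
    (fun x => matDeriv N F x + F x * A - A * F x) ∈ matPolyDegreeLT N n := by
  simp_rw [add_sub_assoc]
  exact add_mem (matDeriv_mem_matPolyDegreeLT hF.mem_matPolyDegreeLT)
    (hF.mul_sub_mul_mem_matPolyDegreeLT A)

lemma matIP_ofReal_smul_comm (W F G : ℝ → Matrix (Fin N) (Fin N) ℂ) (f : ℝ → ℝ) :
    matIP N W (fun y => (f y : ℂ) • F y) G = matIP N W F (fun y => (f y : ℂ) • G y) := by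
  unfold matIP
  simp only [Matrix.conjTranspose_smul, Complex.star_def, Complex.conj_ofReal, smul_mul_assoc,
    mul_smul_comm]

section MatInt

variable {F G : ℝ → Matrix (Fin N) (Fin N) ℂ}

lemma matInt_sub (hF : ∀ i j, Integrable fun y => F y i j)
    (hG : ∀ i j, Integrable fun y => G y i j) :
    matInt N (fun y => F y - G y) = matInt N F - matInt N G := by
  ext i j
  exact integral_sub (hF i j) (hG i j)

lemma matInt_mul_left (C : Matrix (Fin N) (Fin N) ℂ) (hF : ∀ i j, Integrable fun y => F y i j) :
    matInt N (fun y => C * F y) = C * matInt N F := by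
  ext i j
  simp only [matInt, Matrix.of_apply, Matrix.mul_apply]
  rw [integral_finsetSum _ fun a _ => (hF a j).const_mul _]
  simp only [integral_const_mul]

lemma matInt_mul_right (C : Matrix (Fin N) (Fin N) ℂ) (hF : ∀ i j, Integrable fun y => F y i j) :
    matInt N (fun y => F y * C) = matInt N F * C := by
  ext i j
  simp only [matInt, Matrix.of_apply, Matrix.mul_apply]
  rw [integral_finsetSum _ fun a _ => (hF i a).mul_const _]
  simp only [integral_mul_const]

lemma matInt_finsetSum {ι : Type*} (s : Finset ι) (F : ι → ℝ → Matrix (Fin N) (Fin N) ℂ)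
    (hF : ∀ l ∈ s, ∀ i j, Integrable fun y => F l y i j) :
    matInt N (fun y => ∑ l ∈ s, F l y) = ∑ l ∈ s, matInt N (F l) := by
  ext i j
  simp only [matInt, Matrix.of_apply, Matrix.sum_apply]
  exact integral_finsetSum s fun l hl => hF l hl i j

end MatInt

section Weight

variable {W : ℝ → Matrix (Fin N) (Fin N) ℂ}
  (hWmeas : ∀ i j : Fin N, Measurable fun x => W x i j)
  (hWmom : ∀ (m : ℕ) (i j : Fin N), Integrable fun x : ℝ => |x| ^ m * ‖W x i j‖)
include hWmeas hWmom

lemma integrable_ofReal_pow_mul_weight (m : ℕ) (a b : Fin N) :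
    Integrable fun y : ℝ => (y : ℂ) ^ m * W y a b := by
  refine (hWmom m a b).mono'
    ((Complex.measurable_ofReal.pow_const m).mul (hWmeas a b)).aestronglyMeasurable ?_
  filter_upwards with y
  simp

lemma integrable_ofReal_pow_smul_mul_weight_mul_apply (m : ℕ) (C D : Matrix (Fin N) (Fin N) ℂ)
    (i j : Fin N) :
    Integrable fun y : ℝ => ((y : ℂ) ^ m • (C * W y * D)) i j := by
  have hentry : ∀ y : ℝ, ((y : ℂ) ^ m • (C * W y * D)) i j =
      ∑ b, ∑ a, (C i a * D b j) * ((y : ℂ) ^ m * W y a b) := by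
    intro y
    simp only [Matrix.smul_apply, Matrix.mul_apply, smul_eq_mul, sum_mul, mul_sum]
    exact sum_congr rfl fun b _ => sum_congr rfl fun a _ => by ring
  simp_rw [hentry]
  exact integrable_finsetSum _ fun b _ => integrable_finsetSum _ fun a _ =>
    (integrable_ofReal_pow_mul_weight hWmeas hWmom m a b).const_mul _

lemma integrable_mul_weight_mul_conjTranspose_apply {F G : ℝ → Matrix (Fin N) (Fin N) ℂ}
    (hF : IsMatPoly N F) (hG : IsMatPoly N G) (i j : Fin N) :
    Integrable fun y => (F y * W y * (G y)ᴴ) i j := by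
  obtain ⟨d, c, hc⟩ := hF
  obtain ⟨e, c', hc'⟩ := hG
  have hexpand : ∀ y : ℝ, F y * W y * (G y)ᴴ =
      ∑ l ∈ range (e + 1), ∑ k ∈ range (d + 1), (y : ℂ) ^ (l + k) • (c k * W y * (c' l)ᴴ) := by
    intro y
    simp only [hc y, hc' y, Matrix.conjTranspose_sum, Matrix.conjTranspose_smul, star_pow,
      Complex.star_def, Complex.conj_ofReal, sum_mul, mul_sum, smul_mul_assoc, mul_smul_comm,
      smul_sum, smul_smul, pow_add]
  simp_rw [hexpand, Matrix.sum_apply]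
  exact integrable_finsetSum _ fun l _ => integrable_finsetSum _ fun k _ =>
    integrable_ofReal_pow_smul_mul_weight_mul_apply hWmeas hWmom _ _ _ i j

lemma matIP_sub_left {F G H : ℝ → Matrix (Fin N) (Fin N) ℂ}
    (hF : IsMatPoly N F) (hG : IsMatPoly N G) (hH : IsMatPoly N H) :
    matIP N W (fun y => F y - G y) H = matIP N W F H - matIP N W G H := by
  unfold matIP
  simp_rw [Matrix.sub_mul]
  exact matInt_sub (integrable_mul_weight_mul_conjTranspose_apply hWmeas hWmom hF hH)
    (integrable_mul_weight_mul_conjTranspose_apply hWmeas hWmom hG hH)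

lemma matIP_sub_right {F G H : ℝ → Matrix (Fin N) (Fin N) ℂ}
    (hF : IsMatPoly N F) (hG : IsMatPoly N G) (hH : IsMatPoly N H) :
    matIP N W F (fun y => G y - H y) = matIP N W F G - matIP N W F H := by
  unfold matIP
  simp_rw [Matrix.conjTranspose_sub, Matrix.mul_sub]
  exact matInt_sub (integrable_mul_weight_mul_conjTranspose_apply hWmeas hWmom hF hG)
    (integrable_mul_weight_mul_conjTranspose_apply hWmeas hWmom hF hH)

lemma matIP_mul_left (C : Matrix (Fin N) (Fin N) ℂ) {F G : ℝ → Matrix (Fin N) (Fin N) ℂ}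
    (hF : IsMatPoly N F) (hG : IsMatPoly N G) :
    matIP N W (fun y => C * F y) G = C * matIP N W F G := by
  unfold matIP
  rw [← matInt_mul_left C (integrable_mul_weight_mul_conjTranspose_apply hWmeas hWmom hF hG)]
  simp only [Matrix.mul_assoc]

lemma matIP_mul_right (C : Matrix (Fin N) (Fin N) ℂ) {F G : ℝ → Matrix (Fin N) (Fin N) ℂ}
    (hF : IsMatPoly N F) (hG : IsMatPoly N G) :
    matIP N W F (fun y => C * G y) = matIP N W F G * Cᴴ := by
  unfold matIP
  rw [← matInt_mul_right Cᴴ (integrable_mul_weight_mul_conjTranspose_apply hWmeas hWmom hF hG)]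
  simp only [Matrix.conjTranspose_mul, Matrix.mul_assoc]

lemma matIP_sum_mul_left {ι : Type*} (s : Finset ι) (B : ι → Matrix (Fin N) (Fin N) ℂ)
    {F : ι → ℝ → Matrix (Fin N) (Fin N) ℂ} {G : ℝ → Matrix (Fin N) (Fin N) ℂ}
    (hF : ∀ l ∈ s, IsMatPoly N (F l)) (hG : IsMatPoly N G) :
    matIP N W (fun y => ∑ l ∈ s, B l * F l y) G = ∑ l ∈ s, B l * matIP N W (F l) G := by
  have hsum : matIP N W (fun y => ∑ l ∈ s, B l * F l y) G =
      matInt N fun y => ∑ l ∈ s, (B l * F l y) * W y * (G y)ᴴ := by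
    simp only [matIP, sum_mul]
  rw [hsum, matInt_finsetSum _ _ fun l hl =>
    integrable_mul_weight_mul_conjTranspose_apply hWmeas hWmom ((hF l hl).mul_left _) hG]
  exact sum_congr rfl fun l hl => matIP_mul_left hWmeas hWmom _ (hF l hl) hG

lemma matIP_sum_mul_right {ι : Type*} (s : Finset ι) (B : ι → Matrix (Fin N) (Fin N) ℂ)
    {F : ℝ → Matrix (Fin N) (Fin N) ℂ} {G : ι → ℝ → Matrix (Fin N) (Fin N) ℂ}
    (hF : IsMatPoly N F) (hG : ∀ l ∈ s, IsMatPoly N (G l)) :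
    matIP N W F (fun y => ∑ l ∈ s, B l * G l y) = ∑ l ∈ s, matIP N W F (G l) * (B l)ᴴ := by
  have hsum : matIP N W F (fun y => ∑ l ∈ s, B l * G l y) =
      matInt N fun y => ∑ l ∈ s, F y * W y * (B l * G l y)ᴴ := by
    simp only [matIP, Matrix.conjTranspose_sum, mul_sum]
  rw [hsum, matInt_finsetSum _ _ fun l hl =>
    integrable_mul_weight_mul_conjTranspose_apply hWmeas hWmom hF ((hG l hl).mul_left _)]
  exact sum_congr rfl fun l hl => matIP_mul_right hWmeas hWmom _ hF (hG l hl)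

end Weight

section OrthogonalPolynomials

variable {W : ℝ → Matrix (Fin N) (Fin N) ℂ}
  (hWmeas : ∀ i j : Fin N, Measurable fun x => W x i j)
  (hWmom : ∀ (m : ℕ) (i j : Fin N), Integrable fun x : ℝ => |x| ^ m * ‖W x i j‖)
  {P : ℕ → ℝ → Matrix (Fin N) (Fin N) ℂ} (hP : ∀ n, IsMonicMatPoly N n (P n))
  (hPorth : ∀ n m, n ≠ m → matIP N W (P n) (P m) = 0)
include hWmeas hWmom hP hPorth

lemma matIP_eq_zero_of_mem_matPolyDegreeLT {n d : ℕ} (hdn : d ≤ n)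
    {G : ℝ → Matrix (Fin N) (Fin N) ℂ} (hG : G ∈ matPolyDegreeLT N d) :
    matIP N W (P n) G = 0 := by
  obtain ⟨B, hB⟩ := exists_eq_sum_mul_of_mem_matPolyDegreeLT hP hG
  rw [funext hB, matIP_sum_mul_right hWmeas hWmom _ _ (hP n).isMatPoly
    fun m _ => (hP m).isMatPoly]
  exact sum_eq_zero fun m hm => by
    rw [hPorth n m (by have := mem_range.1 hm; omega), zero_mul]

lemma matIP_sum_mul_eq_mul_matIP_self (B : ℕ → Matrix (Fin N) (Fin N) ℂ) {d m : ℕ}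
    (hm : m < d) :
    matIP N W (fun y => ∑ l ∈ range d, B l * P l y) (P m) = B m * matIP N W (P m) (P m) := by
  rw [matIP_sum_mul_left hWmeas hWmom _ _ (fun l _ => (hP l).isMatPoly) (hP m).isMatPoly]
  exact sum_eq_single_of_mem m (mem_range.2 hm) fun l _ hlm => by rw [hPorth l m hlm, mul_zero]

lemma matIP_polynomial_smul_eq_zero (q : Polynomial ℝ) {m n : ℕ}
    (h : m + 1 + q.natDegree ≤ n) :
    matIP N W (fun y => ((q.eval y : ℝ) : ℂ) • P n y) (P m) = 0 := by
  rw [matIP_ofReal_smul_comm]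
  exact matIP_eq_zero_of_mem_matPolyDegreeLT hWmeas hWmom hP hPorth h
    (polynomial_eval_smul_mem_matPolyDegreeLT q (hP m).mem_matPolyDegreeLT)

lemma matIP_deriv_add_mul_sub_mul (A : Matrix (Fin N) (Fin N) ℂ) (q : Polynomial ℝ)
    (hadj : ∀ R S : ℝ → Matrix (Fin N) (Fin N) ℂ, IsMatPoly N R → IsMatPoly N S →
      matInt N (fun y => (matDeriv N R y + R y * A) * W y * (S y)ᴴ) =
      matInt N (fun y => R y * W y *
        (-(matDeriv N S y) - S y * A + ((q.eval y : ℝ) : ℂ) • S y)ᴴ))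
    {m n : ℕ} (hmn : m < n) :
    matIP N W (fun y => matDeriv N (P n) y + P n y * A - A * P n y) (P m) =
      matIP N W (fun y => ((q.eval y : ℝ) : ℂ) • P n y) (P m) := by
  have hDn := isMatPoly_of_mem_matPolyDegreeLT ((hP n).deriv_add_mul_mem_matPolyDegreeLT A)
  have hDm := (hP m).deriv_add_mul_mem_matPolyDegreeLT A
  have hqPm := isMatPoly_of_mem_matPolyDegreeLT
    (polynomial_eval_smul_mem_matPolyDegreeLT q (hP m).mem_matPolyDegreeLT)
  calc _ = matIP N W (fun y => matDeriv N (P n) y + P n y * A) (P m) -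
        A * matIP N W (P n) (P m) := by
        rw [matIP_sub_left hWmeas hWmom hDn ((hP n).isMatPoly.mul_left A) (hP m).isMatPoly,
          matIP_mul_left hWmeas hWmom A (hP n).isMatPoly (hP m).isMatPoly]
    _ = matIP N W (P n) (fun y => ((q.eval y : ℝ) : ℂ) • P m y -
        (matDeriv N (P m) y + P m y * A)) := by
        rw [hPorth n m hmn.ne', mul_zero, sub_zero]
        refine (hadj _ _ (hP n).isMatPoly (hP m).isMatPoly).trans ?_
        simp only [matIP, neg_sub_left, neg_add_eq_sub, add_comm]
    _ = _ := by
        rw [matIP_sub_right hWmeas hWmom (hP n).isMatPoly hqPm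
            (isMatPoly_of_mem_matPolyDegreeLT hDm),
          matIP_eq_zero_of_mem_matPolyDegreeLT hWmeas hWmom hP hPorth hmn hDm, sub_zero,
          matIP_ofReal_smul_comm]

end OrthogonalPolynomials

lemma sum_Icc_one_sub_eq_sum_range {M : Type*} [AddCommMonoid M] (f : ℕ → M) (n : ℕ) :
    ∑ j ∈ Icc 1 n, f (n - j) = ∑ m ∈ range n, f m := by
  rw [← Ico_add_one_right_eq_Icc, sum_Ico_reflect f 1 le_rfl, Nat.add_sub_cancel, Nat.sub_self,
    range_eq_Ico]

end

theorem lowering_relation_for_MVOP_general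
    (N : ℕ)
    (W : ℝ → Matrix (Fin N) (Fin N) ℂ)
    (hWmeas : ∀ i j : Fin N, Measurable fun x => W x i j)
    (hWmom : ∀ (m : ℕ) (i j : Fin N),
      Integrable fun x : ℝ => |x| ^ m * ‖W x i j‖)
    (P : ℕ → ℝ → Matrix (Fin N) (Fin N) ℂ)
    (hPmonic : ∀ n, IsMonicMatPoly N n (P n))
    (hPorth : ∀ n m, n ≠ m → matIP N W (P n) (P m) = 0)
    (hHpos : ∀ n, (matIP N W (P n) (P n)).PosDef)
    (v : Polynomial ℝ) (k : ℕ) (hdeg : v.natDegree = k)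
    (A : Matrix (Fin N) (Fin N) ℂ)
    (hadj : ∀ R S : ℝ → Matrix (Fin N) (Fin N) ℂ, IsMatPoly N R → IsMatPoly N S →
      matInt N (fun y => (matDeriv N R y + R y * A) * W y * (S y)ᴴ) =
      matInt N (fun y => R y * W y *
        (-(matDeriv N S y) - S y * A + ((v.derivative.eval y : ℝ) : ℂ) • S y)ᴴ)) :
    ∀ (n : ℕ) (x : ℝ),
      matDeriv N (P n) x + P n x * A =
        A * P n x +
          ∑ j ∈ Finset.Icc 1 (min n (k - 1)),
            (matIP N W (fun y => ((v.derivative.eval y : ℝ) : ℂ) • P n y) (P (n - j)) *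
                (matIP N W (P (n - j)) (P (n - j)))⁻¹) * P (n - j) x := by
  intro n x
  obtain ⟨B, hB⟩ := exists_eq_sum_mul_of_mem_matPolyDegreeLT hPmonic
    ((hPmonic n).deriv_add_mul_sub_mul_mem_matPolyDegreeLT A)
  have hcoeff : ∀ m < n, B m =
      matIP N W (fun y => ((v.derivative.eval y : ℝ) : ℂ) • P n y) (P m) *
        (matIP N W (P m) (P m))⁻¹ := fun m hm => by
    rw [← matIP_deriv_add_mul_sub_mul hWmeas hWmom hPmonic hPorth A _ hadj hm, funext hB,
      matIP_sum_mul_eq_mul_matIP_self hWmeas hWmom hPmonic hPorth B hm,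
      Matrix.mul_nonsing_inv_cancel_right _ _ (hHpos m).det_pos.ne'.isUnit]
  have hvanish : ∀ j ∈ Icc 1 n, j ∉ Icc 1 (min n (k - 1)) →
      matIP N W (fun y => ((v.derivative.eval y : ℝ) : ℂ) • P n y) (P (n - j)) = 0 := by
    intro j hj hjk
    have hv := v.natDegree_derivative_le
    simp only [mem_Icc] at hj hjk
    exact matIP_polynomial_smul_eq_zero hWmeas hWmom hPmonic hPorth _ (by omega)
  rw [sum_subset (Icc_subset_Icc_right (min_le_left n (k - 1)))
      fun j hj hjk => by rw [hvanish j hj hjk, zero_mul, zero_mul],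
    sum_Icc_one_sub_eq_sum_range (fun m => (matIP N W (fun y => ((v.derivative.eval y : ℝ) : ℂ) •
      P n y) (P m) * (matIP N W (P m) (P m))⁻¹) * P m x),
    ← sub_eq_iff_eq_add', hB x]
  exact sum_congr rfl fun m hm => by rw [hcoeff m (mem_range.1 hm)]

/-- **Lowering relation for monic MVOPs** (Theorem 3.2 of the paper):
if `𝒟 = ∂_x + A` has adjoint `𝒟† = −𝒟 + v'` with respect to the matrix weight `W`,
then `P'(x,n) + P(x,n)A = A P(x,n) + ∑_{j=1}^{min(n,k−1)} A_{−j}(n) P(x,n−j)`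
with `A_{−j}(n) = ⟨v' P(·,n), P(·,n−j)⟩ ℋ(n−j)⁻¹`. -/
theorem lowering_relation_for_MVOP
    (N : ℕ) (hN : 1 ≤ N)
    (W : ℝ → Matrix (Fin N) (Fin N) ℂ)
    (hWmeas : ∀ i j : Fin N, Measurable fun x => W x i j)
    (hWpos : ∀ᵐ x : ℝ, (W x).PosDef)
    (hWmom : ∀ (m : ℕ) (i j : Fin N),
      Integrable fun x : ℝ => |x| ^ m * ‖W x i j‖)
    (P : ℕ → ℝ → Matrix (Fin N) (Fin N) ℂ)
    (hPmonic : ∀ n, IsMonicMatPoly N n (P n))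
    (hPorth : ∀ n m, n ≠ m → matIP N W (P n) (P m) = 0)
    (hHpos : ∀ n, (matIP N W (P n) (P n)).PosDef)
    (v : Polynomial ℝ) (k : ℕ) (hk : 2 ≤ k) (hdeg : v.natDegree = k)
    (A : Matrix (Fin N) (Fin N) ℂ)
    (hadj : ∀ R S : ℝ → Matrix (Fin N) (Fin N) ℂ, IsMatPoly N R → IsMatPoly N S →
      matInt N (fun y => (matDeriv N R y + R y * A) * W y * (S y)ᴴ) =
      matInt N (fun y => R y * W y *
        (-(matDeriv N S y) - S y * A + ((v.derivative.eval y : ℝ) : ℂ) • S y)ᴴ)) :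
    ∀ (n : ℕ) (x : ℝ),
      matDeriv N (P n) x + P n x * A =
        A * P n x +
          ∑ j ∈ Finset.Icc 1 (min n (k - 1)),
            (matIP N W (fun y => ((v.derivative.eval y : ℝ) : ℂ) • P n y) (P (n - j)) *
                (matIP N W (P (n - j)) (P (n - j)))⁻¹) * P (n - j) x :=
  lowering_relation_for_MVOP_general N W hWmeas hWmom P hPmonic hPorth hHpos v k hdeg A hadj
end

section
/- Under the stated hypotheses, the monic MVOPs satisfy the raising relation: for every n ≥ 0 and every x ∈ ℝ, −P'(x,n) − P(x,n)A + v'(x)P(x,n) = Σ_{i=0}^{k−1} ℋ(n) A_{−i}(n+i)* ℋ(n+i)⁻¹ P(x,n+i), where A_0(m) := A and, for 1 ≤ i ≤ k−1, A_{−i}(m) := ⟨v'(·)P(·,m), P(·,m−i)⟩ ℋ(m−i)⁻¹ when m ≥ i. -/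
open MeasureTheory Matrix Finset
open scoped ComplexOrder

/-- The coefficient `⟨v'(·)P(·,n), P(·,m)⟩ ℋ(m)⁻¹`. -/
noncomputable def vCoef (N : ℕ) (W : ℝ → Matrix (Fin N) (Fin N) ℂ) (v : Polynomial ℝ)
    (P : ℕ → ℝ → Matrix (Fin N) (Fin N) ℂ) (n m : ℕ) : Matrix (Fin N) (Fin N) ℂ :=
  matIP N W (fun y => ((v.derivative.eval y : ℝ) : ℂ) • P n y) (P m) *
    (matIP N W (P m) (P m))⁻¹

/-!
Let `G := P(·,n)𝒟†`. It is a matrix polynomial of degree `< n + k`, so it equals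
`∑_{m < n+k} ⟨G, P(·,m)⟩ ℋ(m)⁻¹ P(·,m)`. By adjointness and the hermiticity of `W`,
`⟨G, P(·,m)⟩ = ⟨P(·,m)𝒟, P(·,n)⟩*`. For `m < n` this vanishes because `P(·,m)𝒟` has degree `≤ m`;
for `m = n` it is `(A ℋ(n))*`, because `P(·,n)𝒟 - A P(·,n)` has degree `< n` (the leading
coefficient of `P(·,n)` is `I`, which commutes with `A`). For `m > n` we use
`G = v' P(·,n) - P(·,n)𝒟` instead: the second term is orthogonal to `P(·,m)` and
`⟨v' P(·,n), P(·,m)⟩ = ⟨v' P(·,m), P(·,n)⟩* = ℋ(n) A_{-(m-n)}(m)*`.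
-/

namespace MatPoly

variable {N : ℕ} {W : ℝ → Matrix (Fin N) (Fin N) ℂ}

def matPolyLT (N d : ℕ) : Submodule ℂ (ℝ → Matrix (Fin N) (Fin N) ℂ) where
  carrier := {F | ∃ c : ℕ → Matrix (Fin N) (Fin N) ℂ,
    ∀ x : ℝ, F x = ∑ j ∈ range d, (x : ℂ) ^ j • c j}
  add_mem' := by
    rintro F G ⟨c, hc⟩ ⟨e, he⟩
    exact ⟨c + e, fun x => by simp [hc x, he x, sum_add_distrib]⟩
  zero_mem' := ⟨0, fun x => by simp⟩
  smul_mem' := by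
    rintro z F ⟨c, hc⟩
    exact ⟨z • c, fun x => by simp [hc x, smul_sum, smul_comm z]⟩

theorem mem_matPolyLT_succ {d : ℕ} {F : ℝ → Matrix (Fin N) (Fin N) ℂ} :
    F ∈ matPolyLT N (d + 1) ↔
      ∃ G ∈ matPolyLT N d, ∃ C, ∀ x : ℝ, F x = G x + (x : ℂ) ^ d • C := by
  constructor
  · rintro ⟨c, hc⟩
    exact ⟨_, ⟨c, fun _ => rfl⟩, c d, fun x => by rw [hc x, sum_range_succ]⟩
  · rintro ⟨G, ⟨c, hc⟩, C, hF⟩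
    refine ⟨Function.update c d C, fun x => ?_⟩
    rw [hF x, hc x, sum_range_succ, Function.update_self]
    congr 1
    refine sum_congr rfl fun j hj => ?_
    rw [Function.update_of_ne (mem_range.mp hj).ne]

theorem matPolyLT_mono {d e : ℕ} (h : d ≤ e) : matPolyLT N d ≤ matPolyLT N e := by
  rintro F ⟨c, hc⟩
  refine ⟨fun j => if j < d then c j else 0, fun x => ?_⟩
  rw [hc x, ← sum_range_add_sum_Ico _ h]
  simp +contextual [sum_ite, filter_true_of_mem, mem_range.mp]

theorem const_mul_mem_matPolyLT {d : ℕ} {F : ℝ → Matrix (Fin N) (Fin N) ℂ}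
    (hF : F ∈ matPolyLT N d) (B : Matrix (Fin N) (Fin N) ℂ) :
    (fun x => B * F x) ∈ matPolyLT N d := by
  obtain ⟨c, hc⟩ := hF
  exact ⟨fun j => B * c j, fun x => by simp [hc x, mul_sum]⟩

theorem mul_const_mem_matPolyLT {d : ℕ} {F : ℝ → Matrix (Fin N) (Fin N) ℂ}
    (hF : F ∈ matPolyLT N d) (B : Matrix (Fin N) (Fin N) ℂ) :
    (fun x => F x * B) ∈ matPolyLT N d := by
  obtain ⟨c, hc⟩ := hF
  exact ⟨fun j => c j * B, fun x => by simp [hc x, sum_mul]⟩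

theorem pow_smul_mem_matPolyLT {d : ℕ} {F : ℝ → Matrix (Fin N) (Fin N) ℂ}
    (hF : F ∈ matPolyLT N d) (i : ℕ) :
    (fun x : ℝ => (x : ℂ) ^ i • F x) ∈ matPolyLT N (d + i) := by
  obtain ⟨c, hc⟩ := hF
  refine ⟨fun j => if i ≤ j then c (j - i) else 0, fun x => ?_⟩
  dsimp only
  rw [hc x, smul_sum, add_comm, sum_range_add]
  simp +contextual [smul_smul, pow_add, sum_eq_zero]

theorem polynomial_smul_mem_matPolyLT {d : ℕ} {F : ℝ → Matrix (Fin N) (Fin N) ℂ}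
    (hF : F ∈ matPolyLT N d) (p : Polynomial ℝ) :
    (fun x => ((p.eval x : ℝ) : ℂ) • F x) ∈ matPolyLT N (d + p.natDegree) := by
  have hsum : (fun x => ((p.eval x : ℝ) : ℂ) • F x) =
      ∑ i ∈ range (p.natDegree + 1), ((p.coeff i : ℝ) : ℂ) • fun x : ℝ => (x : ℂ) ^ i • F x := by
    funext x
    simp [Polynomial.eval_eq_sum_range, sum_smul, mul_smul, Complex.coe_smul]
  rw [hsum]
  refine Submodule.sum_mem _ fun i hi => Submodule.smul_mem _ _ ?_
  exact matPolyLT_mono (by have := mem_range.mp hi; omega) (pow_smul_mem_matPolyLT hF i)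

theorem matDeriv_mem_matPolyLT {d : ℕ} {F : ℝ → Matrix (Fin N) (Fin N) ℂ}
    (hF : F ∈ matPolyLT N (d + 1)) : matDeriv N F ∈ matPolyLT N d := by
  obtain ⟨c, hc⟩ := hF
  have hderiv : ∀ x : ℝ,
      matDeriv N F x = ∑ j ∈ range (d + 1), ((j : ℂ) * (x : ℂ) ^ (j - 1)) • c j := by
    intro x
    ext a b
    simp only [matDeriv, of_apply, Matrix.sum_apply, Matrix.smul_apply, smul_eq_mul]
    have hentry : (fun y => F y a b) = fun y : ℝ => ∑ j ∈ range (d + 1), (y : ℂ) ^ j * c j a b :=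
      funext fun y => by simp [hc y, Matrix.sum_apply]
    rw [hentry]
    exact (HasDerivAt.fun_sum fun j _ => by
      simpa using ((hasDerivAt_pow j (x : ℂ)).comp_ofReal).mul_const (c j a b)).deriv
  refine ⟨fun j => ((j + 1 : ℕ) : ℂ) • c (j + 1), fun x => ?_⟩
  rw [hderiv x, sum_range_succ']
  simp [smul_smul, mul_comm]

theorem isMatPoly_iff {F : ℝ → Matrix (Fin N) (Fin N) ℂ} :
    IsMatPoly N F ↔ ∃ d, F ∈ matPolyLT N d := by
  constructor
  · rintro ⟨d, c, hc⟩
    exact ⟨d + 1, c, hc⟩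
  · rintro ⟨d, hF⟩
    obtain ⟨c, hc⟩ := matPolyLT_mono d.le_succ hF
    exact ⟨d, c, hc⟩

theorem IsMonicMatPoly.mem_matPolyLT {n : ℕ} {F : ℝ → Matrix (Fin N) (Fin N) ℂ}
    (hF : IsMonicMatPoly N n F) : F ∈ matPolyLT N (n + 1) :=
  let ⟨c, _, hc⟩ := hF
  ⟨c, hc⟩

theorem IsMonicMatPoly.isMatPoly {n : ℕ} {F : ℝ → Matrix (Fin N) (Fin N) ℂ}
    (hF : IsMonicMatPoly N n F) : IsMatPoly N F :=
  isMatPoly_iff.mpr ⟨_, IsMonicMatPoly.mem_matPolyLT hF⟩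

theorem IsMonicMatPoly.exists_eq_add {n : ℕ} {F : ℝ → Matrix (Fin N) (Fin N) ℂ}
    (hF : IsMonicMatPoly N n F) :
    ∃ R ∈ matPolyLT N n, ∀ x : ℝ, F x = R x + (x : ℂ) ^ n • 1 := by
  obtain ⟨c, hc1, hc⟩ := hF
  exact ⟨_, ⟨c, fun _ => rfl⟩, fun x => by rw [hc x, sum_range_succ, hc1]⟩

theorem exists_eq_sum_mul_of_mem_matPolyLT {P : ℕ → ℝ → Matrix (Fin N) (Fin N) ℂ}
    (hP : ∀ n, IsMonicMatPoly N n (P n)) {d : ℕ} {F : ℝ → Matrix (Fin N) (Fin N) ℂ}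
    (hF : F ∈ matPolyLT N d) :
    ∃ C : ℕ → Matrix (Fin N) (Fin N) ℂ, ∀ x, F x = ∑ m ∈ range d, C m * P m x := by
  induction d generalizing F with
  | zero => exact ⟨0, fun x => by obtain ⟨c, hc⟩ := hF; simpa using hc x⟩
  | succ d ih =>
    obtain ⟨G, hG, C, hFG⟩ := mem_matPolyLT_succ.mp hF
    obtain ⟨R, hR, hPR⟩ := IsMonicMatPoly.exists_eq_add (hP d)
    obtain ⟨C', hC'⟩ := ih (sub_mem hG (const_mul_mem_matPolyLT hR C))
    refine ⟨Function.update C' d C, fun x => ?_⟩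
    rw [sum_range_succ, Function.update_self, hFG x, hPR x,
      sum_congr rfl fun m hm => by rw [Function.update_of_ne (mem_range.mp hm).ne], ← hC' x]
    simp only [Pi.sub_apply, mul_add, Matrix.mul_smul, mul_one]
    abel

/-- `opD N A F` and `opDAdjoint N A v F` are `F𝒟 = F' + FA` and `F𝒟† = -F𝒟 + v'F`. -/
noncomputable def opD (N : ℕ) (A : Matrix (Fin N) (Fin N) ℂ) (F : ℝ → Matrix (Fin N) (Fin N) ℂ) :
    ℝ → Matrix (Fin N) (Fin N) ℂ :=
  fun y => matDeriv N F y + F y * A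

noncomputable def opDAdjoint (N : ℕ) (A : Matrix (Fin N) (Fin N) ℂ) (v : Polynomial ℝ)
    (F : ℝ → Matrix (Fin N) (Fin N) ℂ) : ℝ → Matrix (Fin N) (Fin N) ℂ :=
  fun y => -(matDeriv N F y) - F y * A + ((v.derivative.eval y : ℝ) : ℂ) • F y

theorem opDAdjoint_eq_sub (A : Matrix (Fin N) (Fin N) ℂ) (v : Polynomial ℝ)
    (F : ℝ → Matrix (Fin N) (Fin N) ℂ) :
    opDAdjoint N A v F = fun y => ((v.derivative.eval y : ℝ) : ℂ) • F y - opD N A F y := by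
  funext y
  simp only [opDAdjoint, opD]
  abel

theorem opD_mem_matPolyLT {d : ℕ} {F : ℝ → Matrix (Fin N) (Fin N) ℂ}
    (hF : F ∈ matPolyLT N (d + 1)) (A : Matrix (Fin N) (Fin N) ℂ) :
    opD N A F ∈ matPolyLT N (d + 1) :=
  add_mem (matPolyLT_mono d.le_succ (matDeriv_mem_matPolyLT hF)) (mul_const_mem_matPolyLT hF A)

theorem opD_sub_const_mul_mem_matPolyLT {n : ℕ} {F : ℝ → Matrix (Fin N) (Fin N) ℂ}
    (hF : IsMonicMatPoly N n F) (A : Matrix (Fin N) (Fin N) ℂ) :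
    (fun y => opD N A F y - A * F y) ∈ matPolyLT N n := by
  obtain ⟨R, hR, hFR⟩ := IsMonicMatPoly.exists_eq_add hF
  have hsplit : (fun y => opD N A F y - A * F y) =
      matDeriv N F + ((fun y => R y * A) - fun y => A * R y) := by
    funext y
    simp only [opD, hFR y, Pi.add_apply, Pi.sub_apply, add_mul, mul_add,
      Matrix.smul_mul, Matrix.mul_smul, one_mul, mul_one]
    abel
  rw [hsplit]
  exact add_mem (matDeriv_mem_matPolyLT (IsMonicMatPoly.mem_matPolyLT hF))
    (sub_mem (mul_const_mem_matPolyLT hR A) (const_mul_mem_matPolyLT hR A))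

theorem opDAdjoint_mem_matPolyLT {d : ℕ} {F : ℝ → Matrix (Fin N) (Fin N) ℂ}
    (hF : F ∈ matPolyLT N (d + 1)) (A : Matrix (Fin N) (Fin N) ℂ) {v : Polynomial ℝ}
    (hv : 0 < v.natDegree) : opDAdjoint N A v F ∈ matPolyLT N (d + v.natDegree) := by
  have hv' := v.natDegree_derivative_le
  exact add_mem
    (sub_mem (neg_mem (matPolyLT_mono (by omega) (matDeriv_mem_matPolyLT hF)))
      (matPolyLT_mono (by omega) (mul_const_mem_matPolyLT hF A)))
    (matPolyLT_mono (by omega) (polynomial_smul_mem_matPolyLT hF v.derivative))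

def MatIntegrable (N : ℕ) (F : ℝ → Matrix (Fin N) (Fin N) ℂ) : Prop :=
  ∀ i j, Integrable fun y => F y i j

theorem MatIntegrable.sum {ι : Type*} (s : Finset ι) {F : ι → ℝ → Matrix (Fin N) (Fin N) ℂ}
    (hF : ∀ m ∈ s, MatIntegrable N (F m)) : MatIntegrable N fun y => ∑ m ∈ s, F m y := by
  intro i j
  simpa only [Matrix.sum_apply] using integrable_finsetSum s fun m hm => hF m hm i j

theorem MatIntegrable.const_mul {F : ℝ → Matrix (Fin N) (Fin N) ℂ} (hF : MatIntegrable N F)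
    (C : Matrix (Fin N) (Fin N) ℂ) : MatIntegrable N fun y => C * F y := by
  intro i j
  simpa only [mul_apply] using integrable_finsetSum _ fun a _ => (hF a j).const_mul (C i a)

theorem MatIntegrable.mul_const {F : ℝ → Matrix (Fin N) (Fin N) ℂ} (hF : MatIntegrable N F)
    (C : Matrix (Fin N) (Fin N) ℂ) : MatIntegrable N fun y => F y * C := by
  intro i j
  simpa only [mul_apply] using integrable_finsetSum _ fun a _ => (hF i a).mul_const (C a j)

theorem matInt_sub {F G : ℝ → Matrix (Fin N) (Fin N) ℂ} (hF : MatIntegrable N F)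
    (hG : MatIntegrable N G) : matInt N (fun y => F y - G y) = matInt N F - matInt N G := by
  ext i j
  exact integral_sub (hF i j) (hG i j)

theorem matInt_sum {ι : Type*} (s : Finset ι) {F : ι → ℝ → Matrix (Fin N) (Fin N) ℂ}
    (hF : ∀ m ∈ s, MatIntegrable N (F m)) :
    matInt N (fun y => ∑ m ∈ s, F m y) = ∑ m ∈ s, matInt N (F m) := by
  ext i j
  simpa only [matInt, of_apply, Matrix.sum_apply] using
    integral_finsetSum s fun m hm => hF m hm i j

theorem matInt_const_mul {F : ℝ → Matrix (Fin N) (Fin N) ℂ} (hF : MatIntegrable N F)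
    (C : Matrix (Fin N) (Fin N) ℂ) : matInt N (fun y => C * F y) = C * matInt N F := by
  ext i j
  simp only [matInt, of_apply, mul_apply]
  rw [integral_finsetSum _ fun a _ => (hF a j).const_mul (C i a)]
  simp_rw [integral_const_mul]

theorem matInt_congr_ae {F G : ℝ → Matrix (Fin N) (Fin N) ℂ} (h : ∀ᵐ y, F y = G y) :
    matInt N F = matInt N G := by
  ext i j
  exact integral_congr_ae (h.mono fun y hy => congrFun (congrFun hy i) j)

theorem conjTranspose_matInt (F : ℝ → Matrix (Fin N) (Fin N) ℂ) :
    (matInt N F)ᴴ = matInt N fun y => (F y)ᴴ := by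
  ext i j
  exact integral_conj.symm

def HasMatMoments (N : ℕ) (W : ℝ → Matrix (Fin N) (Fin N) ℂ) : Prop :=
  ∀ m : ℕ, MatIntegrable N fun y => (y : ℂ) ^ m • W y

theorem hasMatMoments_of_integrable {W : ℝ → Matrix (Fin N) (Fin N) ℂ}
    (hWmeas : ∀ i j, Measurable fun x => W x i j)
    (hWmom : ∀ (m : ℕ) (i j : Fin N), Integrable fun x : ℝ => |x| ^ m * ‖W x i j‖) :
    HasMatMoments N W := by
  intro m i j
  refine (integrable_norm_iff ?_).mp ?_
  · exact ((Complex.measurable_ofReal.pow_const m).mul (hWmeas i j)).aestronglyMeasurable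
  · simpa using hWmom m i j

theorem matIntegrable_mul_weight_mul (hW : HasMatMoments N W)
    {F G : ℝ → Matrix (Fin N) (Fin N) ℂ} (hF : IsMatPoly N F) (hG : IsMatPoly N G) :
    MatIntegrable N fun y => F y * W y * (G y)ᴴ := by
  obtain ⟨d, c, hc⟩ := hF
  obtain ⟨e, u, hu⟩ := hG
  have hexpand : ∀ y : ℝ, F y * W y * (G y)ᴴ = ∑ j ∈ range (d + 1), ∑ l ∈ range (e + 1),
      c j * ((y : ℂ) ^ (j + l) • W y) * (u l)ᴴ := by
    intro y
    simp only [hc y, hu y, conjTranspose_sum, conjTranspose_smul, sum_mul, mul_sum, Matrix.mul_smul,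
      Matrix.smul_mul, smul_smul, pow_add, Complex.star_def, map_pow, Complex.conj_ofReal]
    rw [sum_comm]
    simp_rw [mul_comm]
  simp_rw [hexpand]
  exact MatIntegrable.sum _ fun j _ => MatIntegrable.sum _ fun l _ =>
    ((hW (j + l)).const_mul (c j)).mul_const (u l)ᴴ

theorem conjTranspose_matIP (hW : ∀ᵐ y, (W y).IsHermitian) (F G : ℝ → Matrix (Fin N) (Fin N) ℂ) :
    (matIP N W F G)ᴴ = matIP N W G F := by
  rw [matIP, conjTranspose_matInt]
  refine matInt_congr_ae (hW.mono fun y hy => ?_)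
  simp only [conjTranspose_mul, conjTranspose_conjTranspose, hy.eq, Matrix.mul_assoc]

theorem matIP_real_smul_left (r : ℝ → ℝ) (F G : ℝ → Matrix (Fin N) (Fin N) ℂ) :
    matIP N W (fun y => (r y : ℂ) • F y) G = matIP N W F (fun y => (r y : ℂ) • G y) := by
  simp only [matIP, conjTranspose_smul, Complex.star_def, Complex.conj_ofReal, Matrix.smul_mul,
    Matrix.mul_smul]

theorem matIP_sub_left (hW : HasMatMoments N W) {F₁ F₂ G : ℝ → Matrix (Fin N) (Fin N) ℂ}
    (hF₁ : IsMatPoly N F₁) (hF₂ : IsMatPoly N F₂) (hG : IsMatPoly N G) :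
    matIP N W (fun y => F₁ y - F₂ y) G = matIP N W F₁ G - matIP N W F₂ G := by
  simp only [matIP, sub_mul]
  exact matInt_sub (matIntegrable_mul_weight_mul hW hF₁ hG) (matIntegrable_mul_weight_mul hW hF₂ hG)

theorem matIP_const_mul_left (hW : HasMatMoments N W) {F G : ℝ → Matrix (Fin N) (Fin N) ℂ}
    (hF : IsMatPoly N F) (hG : IsMatPoly N G) (C : Matrix (Fin N) (Fin N) ℂ) :
    matIP N W (fun y => C * F y) G = C * matIP N W F G := by
  simpa only [matIP, Matrix.mul_assoc] using
    matInt_const_mul (matIntegrable_mul_weight_mul hW hF hG) C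

theorem matIP_sum_mul_left (hW : HasMatMoments N W) {ι : Type*} (s : Finset ι)
    (C : ι → Matrix (Fin N) (Fin N) ℂ) {F : ι → ℝ → Matrix (Fin N) (Fin N) ℂ}
    {G : ℝ → Matrix (Fin N) (Fin N) ℂ} (hF : ∀ m ∈ s, IsMatPoly N (F m)) (hG : IsMatPoly N G) :
    matIP N W (fun y => ∑ m ∈ s, C m * F m y) G = ∑ m ∈ s, C m * matIP N W (F m) G := by
  simp only [matIP, sum_mul, Matrix.mul_assoc]
  rw [matInt_sum]
  · refine sum_congr rfl fun m hm => ?_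
    simpa only [Matrix.mul_assoc] using
      matInt_const_mul (matIntegrable_mul_weight_mul hW (hF m hm) hG) (C m)
  · intro m hm
    simpa only [Matrix.mul_assoc] using
      (matIntegrable_mul_weight_mul hW (hF m hm) hG).const_mul (C m)

section OrthogonalSequence

variable {P : ℕ → ℝ → Matrix (Fin N) (Fin N) ℂ} {A : Matrix (Fin N) (Fin N) ℂ}
  {v : Polynomial ℝ}

theorem matIP_sum_mul_left_orthogonal (hW : HasMatMoments N W)
    (hP : ∀ n, IsMonicMatPoly N n (P n)) (hPorth : ∀ n m, n ≠ m → matIP N W (P n) (P m) = 0)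
    (C : ℕ → Matrix (Fin N) (Fin N) ℂ) (d j : ℕ) :
    matIP N W (fun y => ∑ m ∈ range d, C m * P m y) (P j) =
      if j < d then C j * matIP N W (P j) (P j) else 0 := by
  rw [matIP_sum_mul_left hW _ _ (fun m _ => IsMonicMatPoly.isMatPoly (hP m))
    (IsMonicMatPoly.isMatPoly (hP j))]
  split_ifs with hj
  · exact sum_eq_single_of_mem j (mem_range.mpr hj) fun m _ hm => by rw [hPorth m j hm, mul_zero]
  · exact sum_eq_zero fun m hm => by
      rw [hPorth m j (by rintro rfl; exact hj (mem_range.mp hm)), mul_zero]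

theorem matIP_eq_zero_of_mem_matPolyLT (hW : HasMatMoments N W)
    (hP : ∀ n, IsMonicMatPoly N n (P n)) (hPorth : ∀ n m, n ≠ m → matIP N W (P n) (P m) = 0)
    {d j : ℕ} {F : ℝ → Matrix (Fin N) (Fin N) ℂ} (hF : F ∈ matPolyLT N d) (hdj : d ≤ j) :
    matIP N W F (P j) = 0 := by
  obtain ⟨C, hC⟩ := exists_eq_sum_mul_of_mem_matPolyLT hP hF
  rw [funext hC, matIP_sum_mul_left_orthogonal hW hP hPorth, if_neg hdj.not_gt]

theorem matIP_eq_mul_of_sub_mem_matPolyLT (hW : HasMatMoments N W)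
    (hP : ∀ n, IsMonicMatPoly N n (P n)) (hPorth : ∀ n m, n ≠ m → matIP N W (P n) (P m) = 0)
    {n : ℕ} {F : ℝ → Matrix (Fin N) (Fin N) ℂ} (hF : IsMatPoly N F) (C : Matrix (Fin N) (Fin N) ℂ)
    (hFC : (fun y => F y - C * P n y) ∈ matPolyLT N n) :
    matIP N W F (P n) = C * matIP N W (P n) (P n) := by
  have hPn := IsMonicMatPoly.isMatPoly (hP n)
  have h := matIP_eq_zero_of_mem_matPolyLT hW hP hPorth hFC le_rfl
  rwa [matIP_sub_left hW hF (isMatPoly_iff.mpr ⟨n + 1, const_mul_mem_matPolyLT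
    (IsMonicMatPoly.mem_matPolyLT (hP n)) C⟩) hPn, matIP_const_mul_left hW hPn hPn,
    sub_eq_zero] at h

theorem eq_sum_matIP_mul_inv_mul (hW : HasMatMoments N W)
    (hP : ∀ n, IsMonicMatPoly N n (P n)) (hPorth : ∀ n m, n ≠ m → matIP N W (P n) (P m) = 0)
    (hH : ∀ n, IsUnit (matIP N W (P n) (P n)).det)
    {d : ℕ} {F : ℝ → Matrix (Fin N) (Fin N) ℂ} (hF : F ∈ matPolyLT N d) (x : ℝ) :
    F x = ∑ m ∈ range d, matIP N W F (P m) * (matIP N W (P m) (P m))⁻¹ * P m x := by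
  obtain ⟨C, hC⟩ := exists_eq_sum_mul_of_mem_matPolyLT hP hF
  rw [hC x]
  refine sum_congr rfl fun m hm => ?_
  rw [funext hC, matIP_sum_mul_left_orthogonal hW hP hPorth, if_pos (mem_range.mp hm),
    mul_nonsing_inv_cancel_right _ _ (hH m)]

theorem matIP_opDAdjoint_eq_conjTranspose (hWh : ∀ᵐ y, (W y).IsHermitian)
    (hP : ∀ n, IsMonicMatPoly N n (P n))
    (hadj : ∀ R S, IsMatPoly N R → IsMatPoly N S →
      matIP N W (opD N A R) S = matIP N W R (opDAdjoint N A v S)) (n m : ℕ) :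
    matIP N W (opDAdjoint N A v (P n)) (P m) = (matIP N W (opD N A (P m)) (P n))ᴴ := by
  rw [hadj _ _ (IsMonicMatPoly.isMatPoly (hP m)) (IsMonicMatPoly.isMatPoly (hP n)),
    conjTranspose_matIP hWh]

theorem matIP_opDAdjoint_of_lt (hW : HasMatMoments N W) (hWh : ∀ᵐ y, (W y).IsHermitian)
    (hP : ∀ n, IsMonicMatPoly N n (P n)) (hPorth : ∀ n m, n ≠ m → matIP N W (P n) (P m) = 0)
    (hadj : ∀ R S, IsMatPoly N R → IsMatPoly N S →
      matIP N W (opD N A R) S = matIP N W R (opDAdjoint N A v S)) {n m : ℕ} (hmn : m < n) :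
    matIP N W (opDAdjoint N A v (P n)) (P m) = 0 := by
  rw [matIP_opDAdjoint_eq_conjTranspose hWh hP hadj, matIP_eq_zero_of_mem_matPolyLT hW hP hPorth
    (opD_mem_matPolyLT (IsMonicMatPoly.mem_matPolyLT (hP m)) A) hmn, conjTranspose_zero]

theorem matIP_opDAdjoint_self (hW : HasMatMoments N W) (hWh : ∀ᵐ y, (W y).IsHermitian)
    (hP : ∀ n, IsMonicMatPoly N n (P n)) (hPorth : ∀ n m, n ≠ m → matIP N W (P n) (P m) = 0)
    (hadj : ∀ R S, IsMatPoly N R → IsMatPoly N S →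
      matIP N W (opD N A R) S = matIP N W R (opDAdjoint N A v S)) (n : ℕ) :
    matIP N W (opDAdjoint N A v (P n)) (P n) = matIP N W (P n) (P n) * Aᴴ := by
  have hD : IsMatPoly N (opD N A (P n)) :=
    isMatPoly_iff.mpr ⟨_, opD_mem_matPolyLT (IsMonicMatPoly.mem_matPolyLT (hP n)) A⟩
  rw [matIP_opDAdjoint_eq_conjTranspose hWh hP hadj, matIP_eq_mul_of_sub_mem_matPolyLT hW hP
    hPorth hD A (opD_sub_const_mul_mem_matPolyLT (hP n) A), conjTranspose_mul,
    conjTranspose_matIP hWh]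

theorem matIP_opDAdjoint_of_gt (hW : HasMatMoments N W) (hWh : ∀ᵐ y, (W y).IsHermitian)
    (hP : ∀ n, IsMonicMatPoly N n (P n)) (hPorth : ∀ n m, n ≠ m → matIP N W (P n) (P m) = 0)
    (hH : ∀ n, IsUnit (matIP N W (P n) (P n)).det) {n m : ℕ} (hnm : n < m) :
    matIP N W (opDAdjoint N A v (P n)) (P m) =
      matIP N W (P n) (P n) * (vCoef N W v P m n)ᴴ := by
  have hPn := IsMonicMatPoly.mem_matPolyLT (hP n)
  rw [opDAdjoint_eq_sub, matIP_sub_left hW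
    (isMatPoly_iff.mpr ⟨_, polynomial_smul_mem_matPolyLT hPn _⟩)
    (isMatPoly_iff.mpr ⟨_, opD_mem_matPolyLT hPn A⟩) (IsMonicMatPoly.isMatPoly (hP m)),
    matIP_eq_zero_of_mem_matPolyLT hW hP hPorth (opD_mem_matPolyLT hPn A) hnm, sub_zero,
    matIP_real_smul_left, ← conjTranspose_matIP hWh, vCoef, conjTranspose_mul,
    conjTranspose_nonsing_inv, conjTranspose_matIP hWh (P n), ← Matrix.mul_assoc,
    mul_nonsing_inv _ (hH n), one_mul]

end OrthogonalSequence

end MatPoly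

open MatPoly

theorem raising_relation_for_MVOP_general
    (N : ℕ)
    (W : ℝ → Matrix (Fin N) (Fin N) ℂ)
    (hWmeas : ∀ i j : Fin N, Measurable fun x => W x i j)
    (hWpos : ∀ᵐ x : ℝ, (W x).PosDef)
    (hWmom : ∀ (m : ℕ) (i j : Fin N),
      Integrable fun x : ℝ => |x| ^ m * ‖W x i j‖)
    (P : ℕ → ℝ → Matrix (Fin N) (Fin N) ℂ)
    (hPmonic : ∀ n, IsMonicMatPoly N n (P n))
    (hPorth : ∀ n m, n ≠ m → matIP N W (P n) (P m) = 0)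
    (hHpos : ∀ n, (matIP N W (P n) (P n)).PosDef)
    (v : Polynomial ℝ) (k : ℕ) (hk : 2 ≤ k) (hdeg : v.natDegree = k)
    (A : Matrix (Fin N) (Fin N) ℂ)
    (hadj : ∀ R S : ℝ → Matrix (Fin N) (Fin N) ℂ, IsMatPoly N R → IsMatPoly N S →
      matInt N (fun y => (matDeriv N R y + R y * A) * W y * (S y)ᴴ) =
      matInt N (fun y => R y * W y *
        (-(matDeriv N S y) - S y * A + ((v.derivative.eval y : ℝ) : ℂ) • S y)ᴴ))
    :
    ∀ (n : ℕ) (x : ℝ),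
      -(matDeriv N (P n) x) - P n x * A + ((v.derivative.eval x : ℝ) : ℂ) • P n x =
        ∑ i ∈ Finset.range k,
          matIP N W (P n) (P n) *
            (if i = 0 then A else vCoef N W v P (n + i) n)ᴴ *
            (matIP N W (P (n + i)) (P (n + i)))⁻¹ * P (n + i) x := by
  intro n x
  have hW := hasMatMoments_of_integrable hWmeas hWmom
  have hWh : ∀ᵐ y, (W y).IsHermitian := hWpos.mono fun y hy => hy.1
  have hH : ∀ n, IsUnit (matIP N W (P n) (P n)).det := fun n => (hHpos n).det_pos.ne'.isUnit
  have hmem : opDAdjoint N A v (P n) ∈ matPolyLT N (n + k) :=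
    hdeg ▸ opDAdjoint_mem_matPolyLT (IsMonicMatPoly.mem_matPolyLT (hPmonic n)) A (by omega)
  calc opDAdjoint N A v (P n) x
      = ∑ m ∈ range (n + k), matIP N W (opDAdjoint N A v (P n)) (P m) *
          (matIP N W (P m) (P m))⁻¹ * P m x :=
        eq_sum_matIP_mul_inv_mul hW hPmonic hPorth hH hmem x
    _ = _ := by
      rw [sum_range_add, sum_eq_zero fun m hm => by
        rw [matIP_opDAdjoint_of_lt hW hWh hPmonic hPorth hadj (mem_range.mp hm), zero_mul,
          zero_mul], zero_add]
      refine sum_congr rfl fun i _ => ?_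
      rcases Nat.eq_zero_or_pos i with rfl | hi
      · rw [if_pos rfl, add_zero, matIP_opDAdjoint_self hW hWh hPmonic hPorth hadj]
      · rw [if_neg hi.ne', matIP_opDAdjoint_of_gt hW hWh hPmonic hPorth hH (by omega)]

/-- **Raising relation for monic MVOPs** (Corollary 3.3 of the paper):
`−P'(x,n) − P(x,n)A + v'(x)P(x,n) = ∑_{i=0}^{k−1} ℋ(n) A_{−i}(n+i)* ℋ(n+i)⁻¹ P(x,n+i)`. -/
theorem raising_relation_for_MVOP
    (N : ℕ) (hN : 1 ≤ N)
    (W : ℝ → Matrix (Fin N) (Fin N) ℂ)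
    (hWmeas : ∀ i j : Fin N, Measurable fun x => W x i j)
    (hWpos : ∀ᵐ x : ℝ, (W x).PosDef)
    (hWmom : ∀ (m : ℕ) (i j : Fin N),
      Integrable fun x : ℝ => |x| ^ m * ‖W x i j‖)
    (P : ℕ → ℝ → Matrix (Fin N) (Fin N) ℂ)
    (hPmonic : ∀ n, IsMonicMatPoly N n (P n))
    (hPorth : ∀ n m, n ≠ m → matIP N W (P n) (P m) = 0)
    (hHpos : ∀ n, (matIP N W (P n) (P n)).PosDef)
    (v : Polynomial ℝ) (k : ℕ) (hk : 2 ≤ k) (hdeg : v.natDegree = k)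
    (A : Matrix (Fin N) (Fin N) ℂ)
    (hadj : ∀ R S : ℝ → Matrix (Fin N) (Fin N) ℂ, IsMatPoly N R → IsMatPoly N S →
      matInt N (fun y => (matDeriv N R y + R y * A) * W y * (S y)ᴴ) =
      matInt N (fun y => R y * W y *
        (-(matDeriv N S y) - S y * A + ((v.derivative.eval y : ℝ) : ℂ) • S y)ᴴ))
    :
    ∀ (n : ℕ) (x : ℝ),
      -(matDeriv N (P n) x) - P n x * A + ((v.derivative.eval x : ℝ) : ℂ) • P n x =
        ∑ i ∈ Finset.range k,
          matIP N W (P n) (P n) *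
            (if i = 0 then A else vCoef N W v P (n + i) n)ᴴ *
            (matIP N W (P (n + i)) (P (n + i)))⁻¹ * P (n + i) x :=
  raising_relation_for_MVOP_general N W hWmeas hWpos hWmom P hPmonic hPorth hHpos v k hk hdeg A hadj
end

section
/- Under the stated hypotheses, the recurrence coefficients of the monic MVOPs satisfy the discrete string equations: for all n ≥ 0, [B(n), A] = I + G_{−1}(n) − G_{−1}(n+1), and for all n ≥ 1, [C(n), A] = C(n) G_0(n−1) − G_0(n) C(n), where G_{−1}(n) := ⟨v'(·)P(·,n), P(·,n−1)⟩ ℋ(n−1)⁻¹ for n ≥ 1, G_{−1}(0) := 0, and G_0(n) := ⟨v'(·)P(·,n), P(·,n)⟩ ℋ(n)⁻¹. -/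
open MeasureTheory Matrix Finset
open scoped ComplexOrder

/-!
Write `P(·,n)` as the evaluation of a matrix polynomial `pₙ ∈ M_N(ℂ)[X]` of degree `≤ n` with
`n`-th coefficient `1`. On evaluations of matrix polynomials the matrix inner product is the
form `⟨p, q⟩ = ∑ pₖ μ_{k+l} q_l*` built from the moments `μⱼ = ∫ yʲ W(y) dy`, so the whole
argument is algebra in `M_N(ℂ)[X]`. Orthogonality gives
`⟨q, pₘ⟩ = (q_m - q_{m+1} c_{m+1}) ℋ(m)` whenever `deg q ≤ m + 1`, where `cₙ` is the
coefficient of `xⁿ⁻¹` in `pₙ` (and `c₀ = 0`). The adjointness relation says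
`⟨D r, s⟩ + ⟨r, D s⟩ = ⟨v' r, s⟩` for `D r = r' + r A`; with `(r, s) = (pₙ, pₙ)` and
`(p_{m+1}, pₘ)` it yields `G₀(n) = A + ℋ(n) A* ℋ(n)⁻¹` and `G₋₁(m+1) = m + 1 + [c_{m+1}, A]`.
Comparing the coefficients of `xⁿ` in the recurrence gives `B(n) = cₙ - c_{n+1}`, and both string
equations follow.
-/

open Polynomial

section MomentForm

variable {A : Type*} [Ring A] [StarRing A]

noncomputable def momentForm (μ : ℕ → A) (p q : A[X]) : A :=
  p.sum fun k a => q.sum fun l b => a * μ (k + l) * star b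

variable (μ : ℕ → A)

theorem momentForm_add_right (p q₁ q₂ : A[X]) :
    momentForm μ p (q₁ + q₂) = momentForm μ p q₁ + momentForm μ p q₂ := by
  simp only [momentForm, ← Polynomial.sum_add]
  congr! 3 with k a
  exact sum_add_index _ _ _ (fun _ => by simp) fun _ _ _ => by simp [mul_add]

theorem momentForm_X_pow (k : ℕ) (q : A[X]) :
    momentForm μ (X ^ k) q = q.sum fun l b => μ (k + l) * star b := by
  rw [momentForm, ← monomial_one_right_eq_X_pow, sum_monomial_index _ _ (by simp [sum_def])]
  simp

theorem momentForm_eq_sum_range {p : A[X]} {d : ℕ} (hp : p.natDegree < d) (q : A[X]) :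
    momentForm μ p q = ∑ k ∈ range d, p.coeff k * momentForm μ (X ^ k) q := by
  rw [momentForm, sum_over_range' _ (by simp [sum_def]) d hp]
  refine sum_congr rfl fun k _ => ?_
  simp only [momentForm_X_pow, sum_def, mul_sum, mul_assoc]

theorem star_momentForm (hμ : ∀ k, IsSelfAdjoint (μ k)) (p q : A[X]) :
    star (momentForm μ p q) = momentForm μ q p := by
  simp only [momentForm, sum_def, star_sum, star_mul, star_star, (hμ _).star_eq, mul_assoc]
  rw [sum_comm]
  simp [add_comm]

end MomentForm

section Ring

variable {A : Type*} [Ring A]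

noncomputable def diffOp (a : A) (r : A[X]) : A[X] := derivative r + r * C a

theorem coeff_diffOp (a : A) (r : A[X]) (k : ℕ) :
    (diffOp a r).coeff k = r.coeff (k + 1) * (k + 1) + r.coeff k * a := by
  simp [diffOp, coeff_derivative, coeff_mul_C]

theorem natDegree_diffOp_le (a : A) (r : A[X]) : (diffOp a r).natDegree ≤ r.natDegree :=
  (natDegree_add_le _ _).trans <|
    max_le ((natDegree_derivative_le r).trans (Nat.sub_le _ _)) (natDegree_mul_C_le r a)

-- `(X * p n).coeff n` is the coefficient of `X ^ (n - 1)` in `p n`, and `0` when `n = 0`.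
theorem eq_coeff_sub_coeff_of_recurrence {p : ℕ → A[X]} (hdeg : ∀ n, (p n).natDegree ≤ n)
    (hlead : ∀ n, (p n).coeff n = 1) {n : ℕ} {b c : A}
    (h : X * p n = p (n + 1) + C b * p n + C c * (if n = 0 then 0 else p (n - 1))) :
    b = (X * p n).coeff n - (p (n + 1)).coeff n := by
  have hprev : (if n = 0 then 0 else p (n - 1)).coeff n = 0 := by
    split_ifs
    · exact coeff_zero n
    · exact coeff_eq_zero_of_natDegree_lt ((hdeg _).trans_lt (by omega))
  have hn := congrArg (coeff · n) h
  simp only [coeff_add, coeff_C_mul, hlead, hprev, mul_one, mul_zero, add_zero] at hn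
  rw [hn]
  abel

end Ring

structure IsMonicOrthogonal {A : Type*} [Ring A] [StarRing A] (μ : ℕ → A) (p : ℕ → A[X]) :
    Prop where
  natDegree_le : ∀ n, (p n).natDegree ≤ n
  coeff_self : ∀ n, (p n).coeff n = 1
  orthogonal : ∀ n m, n ≠ m → momentForm μ (p n) (p m) = 0

namespace IsMonicOrthogonal

variable {A : Type*} [Ring A] [StarRing A] {μ : ℕ → A} {p : ℕ → A[X]}

theorem momentForm_eq_sum_add_X_pow (hp : IsMonicOrthogonal μ p) (n : ℕ) (q : A[X]) :
    momentForm μ (p n) q =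
      ∑ k ∈ range n, (p n).coeff k * momentForm μ (X ^ k) q + momentForm μ (X ^ n) q := by
  rw [momentForm_eq_sum_range μ (Nat.lt_succ_of_le (hp.natDegree_le n)), sum_range_succ,
    hp.coeff_self, one_mul]

theorem momentForm_X_pow_of_lt (hp : IsMonicOrthogonal μ p) {j m : ℕ} (hjm : j < m) :
    momentForm μ (X ^ j) (p m) = 0 := by
  induction j using Nat.strong_induction_on with
  | _ j ih =>
    have h := hp.momentForm_eq_sum_add_X_pow j (p m)
    rwa [hp.orthogonal j m hjm.ne, sum_eq_zero fun k hk => by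
      rw [ih k (mem_range.mp hk) (by grind), mul_zero], zero_add, eq_comm] at h

theorem momentForm_X_pow_self (hp : IsMonicOrthogonal μ p) (m : ℕ) :
    momentForm μ (X ^ m) (p m) = momentForm μ (p m) (p m) := by
  rw [hp.momentForm_eq_sum_add_X_pow, sum_eq_zero fun k hk => by
    rw [hp.momentForm_X_pow_of_lt (mem_range.mp hk), mul_zero], zero_add]

theorem momentForm_X_pow_succ (hp : IsMonicOrthogonal μ p) (m : ℕ) :
    momentForm μ (X ^ (m + 1)) (p m) = -((p (m + 1)).coeff m * momentForm μ (p m) (p m)) := by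
  have h := hp.momentForm_eq_sum_add_X_pow (m + 1) (p m)
  rw [hp.orthogonal _ _ (by omega), sum_range_succ, hp.momentForm_X_pow_self,
    sum_eq_zero fun k hk => by
      rw [hp.momentForm_X_pow_of_lt (mem_range.mp hk), mul_zero], zero_add] at h
  exact eq_neg_of_add_eq_zero_right h.symm

theorem momentForm_eq_zero_of_natDegree_lt (hp : IsMonicOrthogonal μ p) {q : A[X]} {m : ℕ}
    (hq : q.natDegree < m) : momentForm μ q (p m) = 0 := by
  rw [momentForm_eq_sum_range μ hq]
  exact sum_eq_zero fun k hk => by rw [hp.momentForm_X_pow_of_lt (mem_range.mp hk), mul_zero]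

theorem momentForm_of_natDegree_le_succ (hp : IsMonicOrthogonal μ p) {q : A[X]} {m : ℕ}
    (hq : q.natDegree ≤ m + 1) :
    momentForm μ q (p m) =
      (q.coeff m - q.coeff (m + 1) * (p (m + 1)).coeff m) * momentForm μ (p m) (p m) := by
  rw [momentForm_eq_sum_range μ (Nat.lt_succ_of_le hq), sum_range_succ, sum_range_succ,
    hp.momentForm_X_pow_succ, hp.momentForm_X_pow_self, sum_eq_zero fun k hk => by
      rw [hp.momentForm_X_pow_of_lt (mem_range.mp hk), mul_zero]]
  noncomm_ring

theorem momentForm_diffOp_self (hp : IsMonicOrthogonal μ p) (hμ : ∀ k, IsSelfAdjoint (μ k))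
    (a : A) (n : ℕ) :
    momentForm μ (diffOp a (p n)) (p n) + momentForm μ (p n) (diffOp a (p n)) =
      a * momentForm μ (p n) (p n) + momentForm μ (p n) (p n) * star a := by
  have hD : momentForm μ (diffOp a (p n)) (p n) = a * momentForm μ (p n) (p n) := by
    rw [hp.momentForm_of_natDegree_le_succ ((natDegree_diffOp_le a _).trans
      ((hp.natDegree_le n).trans n.le_succ)), coeff_diffOp, coeff_diffOp, hp.coeff_self,
      coeff_eq_zero_of_natDegree_lt (p := p n) (by grind [hp.natDegree_le n]),
      coeff_eq_zero_of_natDegree_lt (p := p n) (by grind [hp.natDegree_le n])]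
    simp
  rw [← star_momentForm μ hμ (diffOp a (p n)), hD, star_mul, star_momentForm μ hμ]

theorem momentForm_diffOp_succ (hp : IsMonicOrthogonal μ p) (hμ : ∀ k, IsSelfAdjoint (μ k))
    (a : A) (m : ℕ) :
    momentForm μ (diffOp a (p (m + 1))) (p m) + momentForm μ (p (m + 1)) (diffOp a (p m)) =
      ((m + 1 : A) + ((p (m + 1)).coeff m * a - a * (p (m + 1)).coeff m)) *
        momentForm μ (p m) (p m) := by
  rw [← star_momentForm μ hμ (diffOp a (p m)), hp.momentForm_eq_zero_of_natDegree_lt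
      ((natDegree_diffOp_le a _).trans_lt ((hp.natDegree_le m).trans_lt m.lt_succ_self)),
    star_zero, add_zero, hp.momentForm_of_natDegree_le_succ ((natDegree_diffOp_le a _).trans
      (hp.natDegree_le _)), coeff_diffOp, coeff_diffOp, hp.coeff_self,
    coeff_eq_zero_of_natDegree_lt (p := p (m + 1)) (n := m + 2) (by grind [hp.natDegree_le (m + 1)])]
  push_cast
  noncomm_ring

end IsMonicOrthogonal

section RealEval

variable {n : Type*} [Fintype n] [DecidableEq n]

noncomputable def realEval (y : ℝ) : (Matrix n n ℂ)[X] →+* Matrix n n ℂ :=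
  eval₂RingHom' (RingHom.id _) (algebraMap ℝ _ y) fun a => (Algebra.commutes y a).symm

theorem realEval_eq_eval (y : ℝ) (p : (Matrix n n ℂ)[X]) :
    realEval y p = p.eval (algebraMap ℝ _ y) := rfl

theorem realEval_C (y : ℝ) (a : Matrix n n ℂ) : realEval y (C a) = a := by
  simp [realEval_eq_eval]

theorem realEval_X (y : ℝ) : realEval y (X : (Matrix n n ℂ)[X]) = algebraMap ℝ _ y := by
  simp [realEval_eq_eval]

theorem realEval_eq_sum (y : ℝ) (p : (Matrix n n ℂ)[X]) :
    realEval y p = p.sum fun k a => y ^ k • a := by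
  rw [realEval_eq_eval, eval_eq_sum]
  congr! 2 with k a
  funext a
  rw [← map_pow, Algebra.smul_def, Algebra.commutes]

theorem realEval_map_mul (v : ℝ[X]) (p : (Matrix n n ℂ)[X]) (y : ℝ) :
    realEval y (v.map (algebraMap ℝ _) * p) = ((v.eval y : ℝ) : ℂ) • realEval y p := by
  rw [map_mul, realEval_eq_eval (p := v.map _), eval_map_algebraMap,
    aeval_algebraMap_apply_eq_algebraMap_eval, Algebra.algebraMap_eq_smul_one, smul_one_mul,
    Complex.coe_smul]

theorem realEval_apply (y : ℝ) (p : (Matrix n n ℂ)[X]) (i j : n) :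
    realEval y p i j = (matPolyEquiv.symm p i j).eval (y : ℂ) := by
  rw [← matPolyEquiv_eval, AlgEquiv.apply_symm_apply]
  rfl

theorem realEval_injective :
    Function.Injective fun (p : (Matrix n n ℂ)[X]) (y : ℝ) => realEval y p := by
  intro p q h
  have key : ∀ i j, matPolyEquiv.symm p i j = matPolyEquiv.symm q i j := fun i j =>
    eq_of_infinite_eval_eq _ _ <| (Set.infinite_range_of_injective Complex.ofReal_injective).mono
      (by rintro _ ⟨y, rfl⟩; simpa [← realEval_apply] using congrFun (congrFun (congrFun h y) i) j)
  simpa using congrArg matPolyEquiv (Matrix.ext key)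

theorem hasDerivAt_realEval_apply (p : (Matrix n n ℂ)[X]) (i j : n) (x : ℝ) :
    HasDerivAt (fun y => realEval y p i j) (realEval x (derivative p) i j) x := by
  have h : matPolyEquiv.symm (derivative p) i j = derivative (matPolyEquiv.symm p i j) := by
    ext k
    simp [coeff_derivative, mul_add, ← Nat.cast_comm, ← nsmul_eq_mul]
  simp_rw [realEval_apply, h]
  exact ((matPolyEquiv.symm p i j).hasDerivAt _).comp_ofReal

end RealEval

section MatrixWeight

variable {N : ℕ}

theorem matDeriv_realEval (p : (Matrix (Fin N) (Fin N) ℂ)[X]) :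
    matDeriv N (fun y => realEval y p) = fun y => realEval y (derivative p) := by
  funext x
  ext i j
  exact (hasDerivAt_realEval_apply p i j x).deriv

theorem isMatPoly_realEval (p : (Matrix (Fin N) (Fin N) ℂ)[X]) :
    IsMatPoly N fun y => realEval y p := by
  refine ⟨p.natDegree, p.coeff, fun x => ?_⟩
  simp [realEval_eq_sum, sum_over_range, ← Complex.ofReal_pow, Complex.coe_smul]

theorem exists_realEval_eq_of_isMonicMatPoly {F : ℝ → Matrix (Fin N) (Fin N) ℂ} {d : ℕ}
    (hF : IsMonicMatPoly N d F) :
    ∃ p : (Matrix (Fin N) (Fin N) ℂ)[X], p.natDegree ≤ d ∧ p.coeff d = 1 ∧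
      F = fun y => realEval y p := by
  obtain ⟨c, hcd, hF⟩ := hF
  refine ⟨∑ k ∈ range (d + 1), monomial k (c k), natDegree_sum_le_of_forall_le _ _
    fun k hk => (natDegree_monomial_le _).trans (Nat.lt_succ_iff.mp (mem_range.mp hk)), ?_, ?_⟩
  · simp [coeff_monomial, hcd]
  · funext y
    simp [hF, realEval_eq_sum, ← Complex.ofReal_pow, Complex.coe_smul]

theorem matInt_finset_sum {ι : Type*} (s : Finset ι) {F : ι → ℝ → Matrix (Fin N) (Fin N) ℂ}
    (hF : ∀ t ∈ s, ∀ i j, Integrable fun y => F t y i j) :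
    matInt N (fun y => ∑ t ∈ s, F t y) = ∑ t ∈ s, matInt N (F t) := by
  ext i j
  simp only [matInt, of_apply, Matrix.sum_apply]
  exact integral_finsetSum s fun t ht => hF t ht i j

theorem integrable_mul_mul_apply {F : ℝ → Matrix (Fin N) (Fin N) ℂ}
    (hF : ∀ i j, Integrable fun y => F y i j) (a b : Matrix (Fin N) (Fin N) ℂ) (i j : Fin N) :
    Integrable fun y => (a * F y * b) i j := by
  simp only [mul_apply, sum_mul]
  exact integrable_finsetSum _ fun l _ => integrable_finsetSum _ fun k _ =>
    ((hF k l).const_mul _).mul_const _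

theorem matInt_mul_mul {F : ℝ → Matrix (Fin N) (Fin N) ℂ}
    (hF : ∀ i j, Integrable fun y => F y i j) (a b : Matrix (Fin N) (Fin N) ℂ) :
    matInt N (fun y => a * F y * b) = a * matInt N F * b := by
  ext i j
  simp only [matInt, of_apply, mul_apply, sum_mul]
  rw [integral_finsetSum _ fun l _ => integrable_finsetSum _ fun k _ =>
    ((hF k l).const_mul _).mul_const _]
  refine sum_congr rfl fun l _ => ?_
  rw [integral_finsetSum _ fun k _ => ((hF k l).const_mul _).mul_const _]
  exact sum_congr rfl fun k _ => by rw [integral_mul_const, integral_const_mul]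

noncomputable def matMoment (W : ℝ → Matrix (Fin N) (Fin N) ℂ) (k : ℕ) :
    Matrix (Fin N) (Fin N) ℂ :=
  matInt N fun y => y ^ k • W y

theorem integrable_pow_smul_apply {W : ℝ → Matrix (Fin N) (Fin N) ℂ}
    (hWmeas : ∀ i j : Fin N, Measurable fun x => W x i j)
    (hWmom : ∀ (m : ℕ) (i j : Fin N), Integrable fun x : ℝ => |x| ^ m * ‖W x i j‖)
    (k : ℕ) (i j : Fin N) : Integrable fun y : ℝ => (y ^ k • W y) i j := by
  refine (hWmom k i j).mono' ?_ (Filter.Eventually.of_forall fun y => ?_)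
  · exact ((measurable_id.pow_const k).smul (hWmeas i j)).aestronglyMeasurable
  · simp

theorem isSelfAdjoint_matMoment {W : ℝ → Matrix (Fin N) (Fin N) ℂ}
    (hW : ∀ᵐ x, (W x).IsHermitian) (k : ℕ) : IsSelfAdjoint (matMoment W k) := by
  ext i j
  simp only [matMoment, matInt, star_apply, of_apply, Matrix.smul_apply]
  rw [← starRingEnd_apply, ← integral_conj]
  refine integral_congr_ae (hW.mono fun y hy => ?_)
  simp [← hy.apply i j]

theorem matIP_realEval {W : ℝ → Matrix (Fin N) (Fin N) ℂ}
    (hWmeas : ∀ i j : Fin N, Measurable fun x => W x i j)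
    (hWmom : ∀ (m : ℕ) (i j : Fin N), Integrable fun x : ℝ => |x| ^ m * ‖W x i j‖)
    (p q : (Matrix (Fin N) (Fin N) ℂ)[X]) :
    matIP N W (fun y => realEval y p) (fun y => realEval y q) = momentForm (matMoment W) p q := by
  have hint := integrable_pow_smul_apply hWmeas hWmom
  have h : ∀ y, realEval y p * W y * (realEval y q)ᴴ = ∑ k ∈ p.support, ∑ l ∈ q.support,
      p.coeff k * (y ^ (k + l) • W y) * star (q.coeff l) := fun y => by
    simp only [realEval_eq_sum, sum_def, conjTranspose_sum, sum_mul, mul_sum, conjTranspose_smul,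
      star_trivial, smul_mul_assoc, mul_smul_comm, pow_add, star_eq_conjTranspose, smul_sum]
    rw [sum_comm]
    simp only [smul_smul, mul_comm]
  rw [matIP, funext h, matInt_finset_sum _ fun k _ i j => ?_, momentForm, sum_def]
  · refine sum_congr rfl fun k _ => ?_
    rw [matInt_finset_sum _ fun l _ => integrable_mul_mul_apply (hint _) _ _, sum_def]
    exact sum_congr rfl fun l _ => matInt_mul_mul (hint _) _ _
  · simp only [Matrix.sum_apply]
    exact integrable_finsetSum _ fun l _ => integrable_mul_mul_apply (hint _) _ _ i j

theorem momentForm_diffOp_add_momentForm_diffOp {W : ℝ → Matrix (Fin N) (Fin N) ℂ}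
    (hWmeas : ∀ i j : Fin N, Measurable fun x => W x i j)
    (hWmom : ∀ (m : ℕ) (i j : Fin N), Integrable fun x : ℝ => |x| ^ m * ‖W x i j‖)
    {v' : ℝ[X]} {A : Matrix (Fin N) (Fin N) ℂ}
    (hadj : ∀ R S : ℝ → Matrix (Fin N) (Fin N) ℂ, IsMatPoly N R → IsMatPoly N S →
      matInt N (fun y => (matDeriv N R y + R y * A) * W y * (S y)ᴴ) =
      matInt N (fun y => R y * W y *
        (-(matDeriv N S y) - S y * A + ((v'.eval y : ℝ) : ℂ) • S y)ᴴ))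
    (r s : (Matrix (Fin N) (Fin N) ℂ)[X]) :
    momentForm (matMoment W) (diffOp A r) s + momentForm (matMoment W) r (diffOp A s) =
      momentForm (matMoment W) (v'.map (algebraMap ℝ _) * r) s := by
  have hl : ∀ y, realEval y (derivative r) + realEval y r * A = realEval y (diffOp A r) :=
    fun y => by simp [diffOp, realEval_C]
  have hr : ∀ y, -realEval y (derivative s) - realEval y s * A + ((v'.eval y : ℝ) : ℂ) •
      realEval y s = realEval y (v'.map (algebraMap ℝ _) * s - diffOp A s) :=
    fun y => by simp [diffOp, realEval_C, realEval_map_mul]; abel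
  have h := hadj _ _ (isMatPoly_realEval r) (isMatPoly_realEval s)
  simp only [matDeriv_realEval, hl, hr] at h
  change matIP N W _ _ = matIP N W _ _ at h
  -- `v'` is real-valued, so it moves across the inner product
  have hv : momentForm (matMoment W) r (v'.map (algebraMap ℝ _) * s) =
      momentForm (matMoment W) (v'.map (algebraMap ℝ _) * r) s := by
    rw [← matIP_realEval hWmeas hWmom, ← matIP_realEval hWmeas hWmom]
    simp only [matIP, realEval_map_mul, conjTranspose_smul, Complex.star_def, Complex.conj_ofReal,
      smul_mul_assoc, mul_smul_comm]
  rw [matIP_realEval hWmeas hWmom, matIP_realEval hWmeas hWmom] at h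
  rw [h, ← hv, ← momentForm_add_right, sub_add_cancel]

theorem vCoef_realEval {W : ℝ → Matrix (Fin N) (Fin N) ℂ}
    (hWmeas : ∀ i j : Fin N, Measurable fun x => W x i j)
    (hWmom : ∀ (m : ℕ) (i j : Fin N), Integrable fun x : ℝ => |x| ^ m * ‖W x i j‖)
    {v : ℝ[X]} {A : Matrix (Fin N) (Fin N) ℂ}
    (hadj : ∀ R S : ℝ → Matrix (Fin N) (Fin N) ℂ, IsMatPoly N R → IsMatPoly N S →
      matInt N (fun y => (matDeriv N R y + R y * A) * W y * (S y)ᴴ) =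
      matInt N (fun y => R y * W y *
        (-(matDeriv N S y) - S y * A + ((v.derivative.eval y : ℝ) : ℂ) • S y)ᴴ))
    (p : ℕ → (Matrix (Fin N) (Fin N) ℂ)[X]) (n m : ℕ) :
    vCoef N W v (fun n y => realEval y (p n)) n m =
      (momentForm (matMoment W) (diffOp A (p n)) (p m) +
        momentForm (matMoment W) (p n) (diffOp A (p m))) *
        (momentForm (matMoment W) (p m) (p m))⁻¹ := by
  simp only [vCoef, ← realEval_map_mul, matIP_realEval hWmeas hWmom,
    momentForm_diffOp_add_momentForm_diffOp hWmeas hWmom hadj]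

end MatrixWeight

theorem discrete_string_equations_general
    (N : ℕ)
    (W : ℝ → Matrix (Fin N) (Fin N) ℂ)
    (hWmeas : ∀ i j : Fin N, Measurable fun x => W x i j)
    (hWpos : ∀ᵐ x : ℝ, (W x).PosDef)
    (hWmom : ∀ (m : ℕ) (i j : Fin N),
      Integrable fun x : ℝ => |x| ^ m * ‖W x i j‖)
    (P : ℕ → ℝ → Matrix (Fin N) (Fin N) ℂ)
    (hPmonic : ∀ n, IsMonicMatPoly N n (P n))
    (hPorth : ∀ n m, n ≠ m → matIP N W (P n) (P m) = 0)
    (hHpos : ∀ n, (matIP N W (P n) (P n)).PosDef)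
    (v : Polynomial ℝ)
    (A : Matrix (Fin N) (Fin N) ℂ)
    (hadj : ∀ R S : ℝ → Matrix (Fin N) (Fin N) ℂ, IsMatPoly N R → IsMatPoly N S →
      matInt N (fun y => (matDeriv N R y + R y * A) * W y * (S y)ᴴ) =
      matInt N (fun y => R y * W y *
        (-(matDeriv N S y) - S y * A + ((v.derivative.eval y : ℝ) : ℂ) • S y)ᴴ))
    (B C : ℕ → Matrix (Fin N) (Fin N) ℂ)
    (hrec : ∀ (n : ℕ) (x : ℝ),
      (x : ℂ) • P n x =
        P (n + 1) x + B n * P n x + C n * (if n = 0 then 0 else P (n - 1) x))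
    (hC : ∀ n, 1 ≤ n →
      C n = matIP N W (P n) (P n) * (matIP N W (P (n - 1)) (P (n - 1)))⁻¹) :
    (∀ n : ℕ,
      B n * A - A * B n =
        1 + (if n = 0 then 0 else vCoef N W v P n (n - 1))
          - vCoef N W v P (n + 1) n) ∧
    (∀ n : ℕ, 1 ≤ n →
      C n * A - A * C n =
        C n * vCoef N W v P (n - 1) (n - 1) - vCoef N W v P n n * C n) := by
  choose p hp_deg hp_lead hP using fun n => exists_realEval_eq_of_isMonicMatPoly (hPmonic n)
  obtain rfl : P = fun n y => realEval y (p n) := funext hP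
  have hG := vCoef_realEval hWmeas hWmom hadj p
  set μ := matMoment W
  have hIP : ∀ r s, matIP N W (fun y => realEval y r) (fun y => realEval y s) =
      momentForm μ r s := matIP_realEval hWmeas hWmom
  have hp : IsMonicOrthogonal μ p := ⟨hp_deg, hp_lead, fun n m h => hIP _ _ ▸ hPorth n m h⟩
  have hμ : ∀ k, IsSelfAdjoint (μ k) := isSelfAdjoint_matMoment (hWpos.mono fun _ h => h.1)
  have hH : ∀ n, IsUnit (momentForm μ (p n) (p n)).det := fun n =>
    (isUnit_iff_isUnit_det _).mp (hIP _ _ ▸ hHpos n).isUnit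
  have hB : ∀ n, B n = (X * p n).coeff n - (p (n + 1)).coeff n := fun n =>
    eq_coeff_sub_coeff_of_recurrence hp_deg hp_lead <| realEval_injective <| funext fun x => by
      simpa [realEval_X, realEval_C, apply_ite, Algebra.algebraMap_eq_smul_one, Complex.coe_smul]
        using hrec n x
  refine ⟨fun n => ?_, fun n hn => ?_⟩
  · rcases n with _ | m
    · rw [hB, if_pos rfl, hG, hp.momentForm_diffOp_succ hμ, coeff_X_mul_zero,
        mul_nonsing_inv_cancel_right _ _ (hH 0)]
      push_cast
      noncomm_ring
    · rw [hB, if_neg m.succ_ne_zero, Nat.add_sub_cancel, hG, hG, hp.momentForm_diffOp_succ hμ,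
        hp.momentForm_diffOp_succ hμ, coeff_X_mul, mul_nonsing_inv_cancel_right _ _ (hH _),
        mul_nonsing_inv_cancel_right _ _ (hH _)]
      push_cast
      noncomm_ring
  · obtain ⟨m, rfl⟩ := Nat.exists_eq_add_of_le' hn
    simp only [hIP] at hC
    rw [Nat.add_sub_cancel, hC _ hn, Nat.add_sub_cancel, hG, hG, hp.momentForm_diffOp_self hμ,
      hp.momentForm_diffOp_self hμ]
    have hcancel : ∀ n Z, (momentForm μ (p n) (p n))⁻¹ * (momentForm μ (p n) (p n) * Z) = Z :=
      fun n Z => nonsing_inv_mul_cancel_left _ Z (hH n)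
    simp only [add_mul, mul_add, mul_assoc, hcancel, mul_nonsing_inv _ (hH _), mul_one]
    abel

/-- **Discrete string equations** (Theorem 3.6 of the paper). -/
theorem discrete_string_equations
    (N : ℕ) (hN : 1 ≤ N)
    (W : ℝ → Matrix (Fin N) (Fin N) ℂ)
    (hWmeas : ∀ i j : Fin N, Measurable fun x => W x i j)
    (hWpos : ∀ᵐ x : ℝ, (W x).PosDef)
    (hWmom : ∀ (m : ℕ) (i j : Fin N),
      Integrable fun x : ℝ => |x| ^ m * ‖W x i j‖)
    (P : ℕ → ℝ → Matrix (Fin N) (Fin N) ℂ)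
    (hPmonic : ∀ n, IsMonicMatPoly N n (P n))
    (hPorth : ∀ n m, n ≠ m → matIP N W (P n) (P m) = 0)
    (hHpos : ∀ n, (matIP N W (P n) (P n)).PosDef)
    (v : Polynomial ℝ) (k : ℕ) (hk : 2 ≤ k) (hdeg : v.natDegree = k)
    (A : Matrix (Fin N) (Fin N) ℂ)
    (hadj : ∀ R S : ℝ → Matrix (Fin N) (Fin N) ℂ, IsMatPoly N R → IsMatPoly N S →
      matInt N (fun y => (matDeriv N R y + R y * A) * W y * (S y)ᴴ) =
      matInt N (fun y => R y * W y *
        (-(matDeriv N S y) - S y * A + ((v.derivative.eval y : ℝ) : ℂ) • S y)ᴴ))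
    (B C : ℕ → Matrix (Fin N) (Fin N) ℂ)
    (hrec : ∀ (n : ℕ) (x : ℝ),
      (x : ℂ) • P n x =
        P (n + 1) x + B n * P n x + C n * (if n = 0 then 0 else P (n - 1) x))
    (hC : ∀ n, 1 ≤ n →
      C n = matIP N W (P n) (P n) * (matIP N W (P (n - 1)) (P (n - 1)))⁻¹) :
    (∀ n : ℕ,
      B n * A - A * B n =
        1 + (if n = 0 then 0 else vCoef N W v P n (n - 1))
          - vCoef N W v P (n + 1) n) ∧
    (∀ n : ℕ, 1 ≤ n →
      C n * A - A * C n =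
        C n * vCoef N W v P (n - 1) (n - 1) - vCoef N W v P n n * C n) :=
  discrete_string_equations_general N W hWmeas hWpos hWmom P hPmonic hPorth hHpos v A hadj B C hrec
    hC
end

section
/- Let Φ(x) := e^{−x²/2} L(x). Then the following conjugation identities hold for all x ∈ ℝ: (i) for every differentiable F : ℝ → M_N(ℂ), (F'(x) + F(x)A)Φ(x) = (FΦ)'(x) + x (FΦ)(x); (ii) (J − xA + ½A²)Φ(x) = Φ(x)J; (iii) for every twice differentiable F, (−½F''(x) + F'(x)(xI−A) + F(x)J)Φ(x) = −½(FΦ)''(x) + ½(x²−1)(FΦ)(x) + (FΦ)(x)J. Equivalently, conjugation by Φ turns the operators 𝒟 = ∂_x + A, the Casimir J − xA + ½A², and D = −½∂_x² + ∂_x(xI−A) + J into ∂_x + x, J, and ½(−∂_x² + x² − 1)I + J respectively. -/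
open MeasureTheory Matrix Finset
open scoped ComplexOrder

/-- The physicists' Hermite polynomials, as functions on `ℝ`:
`H_0 = 1`, `H_1(x) = 2x`, `H_{m+1}(x) = 2x H_m(x) − 2m H_{m−1}(x)`. -/
noncomputable def hermiteF : ℕ → ℝ → ℝ
  | 0, _ => 1
  | 1, x => 2 * x
  | (m + 2), x => 2 * x * hermiteF (m + 1) x - 2 * (m + 1) * hermiteF m x

/-- The lower triangular matrix `L(x)` with entries
`L(x)_{jk} = (H_{j−k}(x)/(j−k)!)·(α_j/α_k)` for `j ≥ k` (here `0`-based indices). -/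
noncomputable def Lmat (N : ℕ) (α : Fin N → ℝ) (x : ℝ) : Matrix (Fin N) (Fin N) ℂ :=
  Matrix.of fun j k =>
    if (k : ℕ) ≤ (j : ℕ) then
      ((hermiteF ((j : ℕ) - (k : ℕ)) x / Nat.factorial ((j : ℕ) - (k : ℕ)) *
          (α j / α k) : ℝ) : ℂ)
    else 0

/-- The Hermite-type matrix weight `W(x) = e^{−x²} L(x)L(x)*`. -/
noncomputable def hermW (N : ℕ) (α : Fin N → ℝ) (x : ℝ) : Matrix (Fin N) (Fin N) ℂ :=
  Real.exp (-x ^ 2) • (Lmat N α x * (Lmat N α x)ᴴ)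

/-- The nilpotent shift matrix `A` with `A_{j,j−1} = 2α_j/α_{j−1}` (1-based), i.e.
(0-based) `A j k = 2 α_j / α_k` when `j = k + 1`. -/
noncomputable def Amat (N : ℕ) (α : Fin N → ℝ) : Matrix (Fin N) (Fin N) ℂ :=
  Matrix.of fun j k => if (j : ℕ) = (k : ℕ) + 1 then ((2 * α j / α k : ℝ) : ℂ) else 0

/-- The diagonal matrix `J = diag(1, 2, …, N)`. -/
def Jmat (N : ℕ) : Matrix (Fin N) (Fin N) ℂ :=
  Matrix.diagonal fun j => ((j : ℕ) + 1 : ℂ)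

/-- The function `Φ(x) = e^{−x²/2} L(x)`. -/
noncomputable def PhiMat (N : ℕ) (α : Fin N → ℝ) (x : ℝ) : Matrix (Fin N) (Fin N) ℂ :=
  Real.exp (-x ^ 2 / 2) • Lmat N α x


/-!
Write `c_n = H_n / n!`, extended by `c_n = 0` for `n < 0`. Then `L(x)`, `A L(x)` and `A² L(x)` are
the Toeplitz matrices with entries `c_{j-k}`, `2 c_{j-k-1}` and `4 c_{j-k-2}`, rescaled by
`α_j / α_k`, and `[J, L(x)]` is the one with entries `(j - k) c_{j-k}`. So the Hermite identities
`c_n' = 2 c_{n-1}` and `n c_n = 2x c_{n-1} - 2 c_{n-2}` say exactly that `L' = A L`, i.e.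
`Φ' = (A - x) Φ`, and that `(J - xA + ½A²) L = L J`, which is (ii).
Identity (i) is the product rule for `FΦ` combined with `Φ' = (A - x) Φ`. Applying (i) twice,
to `F` and then to `F' + F A - x F`, and eliminating `ΦJ` by (ii) gives (iii).
-/

open scoped Nat

theorem hasDerivAt_hermiteF_succ (m : ℕ) (x : ℝ) :
    HasDerivAt (hermiteF (m + 1)) (2 * (m + 1) * hermiteF m x) x := by
  induction m using Nat.strong_induction_on generalizing x with
  | _ m ih =>
    match m with
    | 0 => simpa [hermiteF] using (hasDerivAt_id x).const_mul (2 : ℝ)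
    | 1 =>
      rw [show hermiteF 2 = fun y : ℝ => 2 * y * (2 * y) - 2 * ((0 : ℕ) + 1) * 1 from rfl]
      refine ((((hasDerivAt_id' x).const_mul 2).fun_mul
        ((hasDerivAt_id' x).const_mul 2)).sub_const _).congr_deriv ?_
      simp [hermiteF]
      ring
    | m + 2 =>
      rw [show hermiteF (m + 2 + 1) = fun y =>
        2 * y * hermiteF (m + 2) y - 2 * ((m + 1 : ℕ) + 1) * hermiteF (m + 1) y from rfl]
      refine ((((hasDerivAt_id' x).const_mul 2).fun_mul (ih (m + 1) (by omega) x)).fun_sub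
        ((ih m (by omega) x).const_mul _)).congr_deriv ?_
      simp only [hermiteF]
      push_cast
      ring

noncomputable def hermiteCoeff : ℤ → ℝ → ℝ
  | .ofNat m, x => hermiteF m x / m !
  | .negSucc _, _ => 0

theorem hermiteCoeff_natCast (m : ℕ) : hermiteCoeff m = fun x => hermiteF m x / m ! := rfl

theorem hermiteCoeff_of_neg {n : ℤ} (hn : n < 0) : hermiteCoeff n = 0 := by
  cases n with
  | ofNat m => exact absurd hn (by simp)
  | negSucc m => rfl

theorem hasDerivAt_hermiteCoeff (n : ℤ) (x : ℝ) :
    HasDerivAt (hermiteCoeff n) (2 * hermiteCoeff (n - 1) x) x := by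
  rcases lt_or_ge n 0 with hn | hn
  · simp [hermiteCoeff_of_neg hn, hermiteCoeff_of_neg (by omega : n - 1 < 0)]
  lift n to ℕ using hn
  cases n with
  | zero =>
    rw [hermiteCoeff_natCast, hermiteCoeff_of_neg (by omega)]
    simp [hermiteF, hasDerivAt_const]
  | succ m =>
    rw [show ((m + 1 : ℕ) : ℤ) - 1 = m by omega, hermiteCoeff_natCast, hermiteCoeff_natCast]
    refine ((hasDerivAt_hermiteF_succ m x).div_const _).congr_deriv ?_
    rw [Nat.factorial_succ]
    push_cast
    field_simp

theorem hermiteCoeff_recurrence (n : ℤ) (x : ℝ) :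
    n * hermiteCoeff n x = 2 * x * hermiteCoeff (n - 1) x - 2 * hermiteCoeff (n - 2) x := by
  rcases lt_or_ge n 0 with hn | hn
  · simp [hermiteCoeff_of_neg, hn, (by omega : n - 1 < 0), (by omega : n - 2 < 0)]
  lift n to ℕ using hn
  rcases n with _ | _ | m
  · simp [hermiteCoeff_of_neg]
  · rw [hermiteCoeff_natCast, show ((0 + 1 : ℕ) : ℤ) - 1 = (0 : ℕ) from rfl, hermiteCoeff_natCast,
      hermiteCoeff_of_neg (by omega)]
    simp [hermiteF]
  · rw [show ((m + 2 : ℕ) : ℤ) - 1 = (m + 1 : ℕ) by omega, show ((m + 2 : ℕ) : ℤ) - 2 = m by omega]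
    simp only [hermiteCoeff_natCast, hermiteF, Nat.factorial_succ]
    push_cast
    field_simp

section WeightedToeplitz

variable {N : ℕ} (α : Fin N → ℝ)

noncomputable def weightedToeplitz (g : ℤ → ℂ) : Matrix (Fin N) (Fin N) ℂ :=
  of fun j k => g (j - k) * (α j / α k : ℝ)

theorem Lmat_eq_weightedToeplitz (x : ℝ) :
    Lmat N α x = weightedToeplitz α fun n => hermiteCoeff n x := by
  ext j k
  simp only [Lmat, weightedToeplitz, of_apply]
  split_ifs with h
  · rw [← Nat.cast_sub h, hermiteCoeff_natCast]
    push_cast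
    ring
  · simp [hermiteCoeff_of_neg (by omega : (j : ℤ) - k < 0)]

theorem Amat_mul_weightedToeplitz (hα : ∀ j, α j ≠ 0) {g : ℤ → ℂ} (hg : ∀ n < 0, g n = 0) :
    Amat N α * weightedToeplitz α g = weightedToeplitz α fun n => 2 * g (n - 1) := by
  ext ⟨_ | i, hj⟩ k
  · simp [mul_apply, Amat, weightedToeplitz, hg _ (by omega : -(k : ℤ) - 1 < 0)]
  · rw [mul_apply, Finset.sum_eq_single ⟨i, by omega⟩]
    · have hi : α ⟨i, by omega⟩ ≠ 0 := hα _
      simp only [Amat, weightedToeplitz, of_apply, if_true]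
      push_cast
      rw [show (i : ℤ) + 1 - k - 1 = i - k by ring]
      field_simp
    · intro l _ hl
      have : i ≠ l := fun h => hl (Fin.ext h.symm)
      simp [Amat, this]
    · simp

theorem Jmat_mul_sub_mul_Jmat (g : ℤ → ℂ) :
    Jmat N * weightedToeplitz α g - weightedToeplitz α g * Jmat N =
      weightedToeplitz α fun n => n * g n := by
  ext j k
  simp [Jmat, weightedToeplitz]
  ring

end WeightedToeplitz

section Lmat

variable {N : ℕ} {α : Fin N → ℝ}

theorem Amat_mul_Lmat (hα : ∀ j, α j ≠ 0) (x : ℝ) :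
    Amat N α * Lmat N α x = weightedToeplitz α fun n => 2 * hermiteCoeff (n - 1) x := by
  rw [Lmat_eq_weightedToeplitz, Amat_mul_weightedToeplitz α hα]
  intro n hn
  simp [hermiteCoeff_of_neg hn]

theorem Amat_mul_Amat_mul_Lmat (hα : ∀ j, α j ≠ 0) (x : ℝ) :
    Amat N α * (Amat N α * Lmat N α x) =
      weightedToeplitz α fun n => 4 * hermiteCoeff (n - 2) x := by
  rw [Amat_mul_Lmat hα, Amat_mul_weightedToeplitz α hα]
  · congr 1
    ext n
    ring_nf
  · intro n hn
    simp [hermiteCoeff_of_neg (by omega : n - 1 < 0)]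

theorem casimir_mul_Lmat (hα : ∀ j, α j ≠ 0) (x : ℝ) :
    (Jmat N - (x : ℂ) • Amat N α + (1 / 2 : ℂ) • (Amat N α * Amat N α)) * Lmat N α x =
      Lmat N α x * Jmat N := by
  rw [← sub_eq_zero]
  calc _ = (Jmat N * Lmat N α x - Lmat N α x * Jmat N) - (x : ℂ) • (Amat N α * Lmat N α x) +
        (1 / 2 : ℂ) • (Amat N α * (Amat N α * Lmat N α x)) := by
        simp only [add_mul, sub_mul, smul_mul_assoc, mul_assoc]
        abel
    _ = 0 := by
      rw [Amat_mul_Amat_mul_Lmat hα, Amat_mul_Lmat hα, Lmat_eq_weightedToeplitz,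
        Jmat_mul_sub_mul_Jmat]
      ext j k
      have h := congrArg ((↑) : ℝ → ℂ) (hermiteCoeff_recurrence ((j : ℤ) - k) x)
      push_cast at h
      simp only [Matrix.sub_apply, Matrix.add_apply, Matrix.smul_apply, weightedToeplitz, of_apply,
        Matrix.zero_apply, smul_eq_mul]
      push_cast
      linear_combination ((α j : ℂ) / α k) * h

theorem hasDerivAt_Lmat_apply (hα : ∀ j, α j ≠ 0) (x : ℝ) (j k : Fin N) :
    HasDerivAt (fun y => Lmat N α y j k) ((Amat N α * Lmat N α x) j k) x := by
  rw [Amat_mul_Lmat hα]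
  simp only [Lmat_eq_weightedToeplitz, weightedToeplitz, of_apply]
  refine (((hasDerivAt_hermiteCoeff _ x).ofReal_comp).mul_const _).congr_deriv ?_
  push_cast
  ring

end Lmat

section Phi

variable {N : ℕ} {α : Fin N → ℝ}

theorem hasDerivAt_PhiMat_apply (hα : ∀ j, α j ≠ 0) (x : ℝ) (j k : Fin N) :
    HasDerivAt (fun y => PhiMat N α y j k)
      ((Amat N α * PhiMat N α x - (x : ℂ) • PhiMat N α x) j k) x := by
  have hexp : HasDerivAt (fun y => Real.exp (-y ^ 2 / 2)) (Real.exp (-x ^ 2 / 2) * -x) x :=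
    (((hasDerivAt_pow 2 x).fun_neg.div_const 2).exp).congr_deriv (by simp; ring)
  refine ((hexp.ofReal_comp).fun_mul (hasDerivAt_Lmat_apply hα x j k)).congr_deriv ?_
  simp only [PhiMat, Matrix.mul_smul, Matrix.sub_apply, Matrix.smul_apply, Complex.real_smul,
    smul_eq_mul]
  push_cast
  ring

theorem casimir_mul_PhiMat (hα : ∀ j, α j ≠ 0) (x : ℝ) :
    (Jmat N - (x : ℂ) • Amat N α + (1 / 2 : ℂ) • (Amat N α * Amat N α)) * PhiMat N α x =
      PhiMat N α x * Jmat N := by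
  rw [PhiMat, Matrix.mul_smul, Matrix.smul_mul, casimir_mul_Lmat hα]

end Phi

section Conjugation

variable {N : ℕ} {B J : Matrix (Fin N) (Fin N) ℂ} {F Φ : ℝ → Matrix (Fin N) (Fin N) ℂ} {x : ℝ}

theorem hasDerivAt_mul_apply {F' Φ' : Matrix (Fin N) (Fin N) ℂ}
    (hF : ∀ i j, HasDerivAt (fun y => F y i j) (F' i j) x)
    (hΦ : ∀ i j, HasDerivAt (fun y => Φ y i j) (Φ' i j) x) (i j : Fin N) :
    HasDerivAt (fun y => (F y * Φ y) i j) ((F' * Φ x + F x * Φ') i j) x := by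
  simp only [mul_apply, Matrix.add_apply, ← Finset.sum_add_distrib]
  exact HasDerivAt.fun_sum fun l _ => (hF i l).fun_mul (hΦ l j)

theorem matDeriv_mul_of_hasDerivAt
    (hΦ : ∀ i j, HasDerivAt (fun y => Φ y i j) ((B * Φ x - (x : ℂ) • Φ x) i j) x)
    (hF : ∀ i j, DifferentiableAt ℝ (fun y => F y i j) x) :
    matDeriv N (fun y => F y * Φ y) x = (matDeriv N F x + F x * B - (x : ℂ) • F x) * Φ x := by
  have hF' : ∀ i j, HasDerivAt (fun y => F y i j) (matDeriv N F x i j) x :=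
    fun i j => (hF i j).hasDerivAt
  have hprod : matDeriv N F x * Φ x + F x * (B * Φ x - (x : ℂ) • Φ x) =
      (matDeriv N F x + F x * B - (x : ℂ) • F x) * Φ x := by
    simp only [mul_sub, mul_smul_comm, add_mul, sub_mul, smul_mul_assoc, mul_assoc]
    abel
  ext i j
  rw [matDeriv, of_apply, (hasDerivAt_mul_apply hF' hΦ i j).deriv, hprod]

theorem firstOrderOp_conj
    (hΦ : ∀ i j, HasDerivAt (fun y => Φ y i j) ((B * Φ x - (x : ℂ) • Φ x) i j) x)
    (hF : ∀ i j, DifferentiableAt ℝ (fun y => F y i j) x) :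
    (matDeriv N F x + F x * B) * Φ x =
      matDeriv N (fun y => F y * Φ y) x + (x : ℂ) • (F x * Φ x) := by
  rw [matDeriv_mul_of_hasDerivAt hΦ hF, sub_mul, smul_mul_assoc, sub_add_cancel]

theorem hasDerivAt_matDeriv_add_mul_sub_smul_apply
    (hF : ∀ i j, DifferentiableAt ℝ (fun y => F y i j) x)
    (hF' : ∀ i j, DifferentiableAt ℝ (fun y => matDeriv N F y i j) x) (i j : Fin N) :
    HasDerivAt (fun y => (matDeriv N F y + F y * B - (y : ℂ) • F y) i j)
      ((matDeriv N (matDeriv N F) x + matDeriv N F x * B - F x - (x : ℂ) • matDeriv N F x) i j)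
      x := by
  have hFd : ∀ i j, HasDerivAt (fun y => F y i j) (matDeriv N F x i j) x :=
    fun i j => (hF i j).hasDerivAt
  have hFB := hasDerivAt_mul_apply (Φ' := 0) hFd (fun i j => hasDerivAt_const x (B i j)) i j
  have hxF := ((hasDerivAt_id x).ofReal_comp).fun_mul (hFd i j)
  have hF'd : HasDerivAt (fun y => matDeriv N F y i j) (matDeriv N (matDeriv N F) x i j) x :=
    (hF' i j).hasDerivAt
  refine ((hF'd.add hFB).sub hxF).congr_deriv ?_
  simp only [Matrix.add_apply, Matrix.sub_apply, Matrix.smul_apply, Matrix.zero_apply, mul_zero,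
    add_zero, id, Complex.ofReal_one, one_mul, smul_eq_mul]
  ring

theorem secondOrderOp_conj
    (hΦ : ∀ y i j, HasDerivAt (fun z => Φ z i j) ((B * Φ y - (y : ℂ) • Φ y) i j) y)
    (hC : (J - (x : ℂ) • B + (1 / 2 : ℂ) • (B * B)) * Φ x = Φ x * J)
    (hF : ∀ i j, Differentiable ℝ fun y => F y i j)
    (hF' : ∀ i j, DifferentiableAt ℝ (fun y => matDeriv N F y i j) x) :
    (-(1 / 2 : ℂ) • matDeriv N (matDeriv N F) x + matDeriv N F x * ((x : ℂ) • 1 - B) +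
        F x * J) * Φ x =
      -(1 / 2 : ℂ) • matDeriv N (matDeriv N (fun y => F y * Φ y)) x +
        ((1 / 2 : ℂ) * ((x : ℂ) ^ 2 - 1)) • (F x * Φ x) + (F x * Φ x) * J := by
  set G := fun y => matDeriv N F y + F y * B - (y : ℂ) • F y with hG_def
  have hG := hasDerivAt_matDeriv_add_mul_sub_smul_apply (B := B) (fun i j => hF i j x) hF'
  have hFΦ : matDeriv N (fun y => F y * Φ y) = fun y => G y * Φ y :=
    funext fun y => matDeriv_mul_of_hasDerivAt (hΦ y) fun i j => hF i j y
  have hGΦ : matDeriv N (fun y => G y * Φ y) x =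
      (matDeriv N G x + G x * B - (x : ℂ) • G x) * Φ x :=
    matDeriv_mul_of_hasDerivAt (hΦ x) fun i j => (hG i j).differentiableAt
  have hG' : matDeriv N G x =
      matDeriv N (matDeriv N F) x + matDeriv N F x * B - F x - (x : ℂ) • matDeriv N F x :=
    ext fun i j => (hG i j).deriv
  rw [hFΦ, hGΦ, hG', mul_assoc (F x), ← hC, hG_def]
  simp only [mul_add, add_mul, mul_sub, sub_mul, smul_mul_assoc, mul_smul_comm, smul_add, smul_sub,
    smul_smul, mul_assoc, mul_one]
  module

end Conjugation

theorem hermite_conjugation_identities_general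
    (N : ℕ) (α : Fin N → ℝ) (hα : ∀ j, 0 < α j) :
    (∀ F : ℝ → Matrix (Fin N) (Fin N) ℂ,
      (∀ i j, Differentiable ℝ fun y => F y i j) →
      ∀ x : ℝ,
        (matDeriv N F x + F x * Amat N α) * PhiMat N α x =
          matDeriv N (fun y => F y * PhiMat N α y) x +
            (x : ℂ) • (F x * PhiMat N α x)) ∧
    (∀ x : ℝ,
      (Jmat N - (x : ℂ) • Amat N α + (1 / 2 : ℂ) • (Amat N α * Amat N α)) *
          PhiMat N α x =
        PhiMat N α x * Jmat N) ∧
    (∀ F : ℝ → Matrix (Fin N) (Fin N) ℂ,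
      (∀ i j, Differentiable ℝ fun y => F y i j) →
      (∀ i j, Differentiable ℝ fun y => deriv (fun z => F z i j) y) →
      ∀ x : ℝ,
        (-(1 / 2 : ℂ) • matDeriv N (matDeriv N F) x +
            matDeriv N F x * ((x : ℂ) • (1 : Matrix (Fin N) (Fin N) ℂ) - Amat N α) +
            F x * Jmat N) * PhiMat N α x =
          -(1 / 2 : ℂ) • matDeriv N (matDeriv N (fun y => F y * PhiMat N α y)) x +
            ((1 / 2 : ℂ) * ((x : ℂ) ^ 2 - 1)) • (F x * PhiMat N α x) +
            (F x * PhiMat N α x) * Jmat N) := by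
  have hα₀ : ∀ j, α j ≠ 0 := fun j => (hα j).ne'
  have hΦ := hasDerivAt_PhiMat_apply hα₀
  have hC := casimir_mul_PhiMat hα₀
  exact ⟨fun F hF x => firstOrderOp_conj (hΦ x) fun i j => hF i j x, hC,
    fun F hF hF' x => secondOrderOp_conj hΦ (hC x) hF fun i j => hF' i j x⟩

/-- **Conjugation identities for `Φ(x) = e^{−x²/2}L(x)`** (Lemma 5.12 of the paper):
conjugation by `Φ` turns `𝒟 = ∂_x + A` into `∂_x + x`, the Casimir
`J − xA + ½A²` into `J`, and `D = −½∂_x² + ∂_x(xI−A) + J` into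
`½(−∂_x² + x² − 1)I + J`. -/
theorem hermite_conjugation_identities
    (N : ℕ) (hN : 1 ≤ N) (α : Fin N → ℝ) (hα : ∀ j, 0 < α j) :
    (∀ F : ℝ → Matrix (Fin N) (Fin N) ℂ,
      (∀ i j, Differentiable ℝ fun y => F y i j) →
      ∀ x : ℝ,
        (matDeriv N F x + F x * Amat N α) * PhiMat N α x =
          matDeriv N (fun y => F y * PhiMat N α y) x +
            (x : ℂ) • (F x * PhiMat N α x)) ∧
    (∀ x : ℝ,
      (Jmat N - (x : ℂ) • Amat N α + (1 / 2 : ℂ) • (Amat N α * Amat N α)) *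
          PhiMat N α x =
        PhiMat N α x * Jmat N) ∧
    (∀ F : ℝ → Matrix (Fin N) (Fin N) ℂ,
      (∀ i j, Differentiable ℝ fun y => F y i j) →
      (∀ i j, Differentiable ℝ fun y => deriv (fun z => F z i j) y) →
      ∀ x : ℝ,
        (-(1 / 2 : ℂ) • matDeriv N (matDeriv N F) x +
            matDeriv N F x * ((x : ℂ) • (1 : Matrix (Fin N) (Fin N) ℂ) - Amat N α) +
            F x * Jmat N) * PhiMat N α x =
          -(1 / 2 : ℂ) • matDeriv N (matDeriv N (fun y => F y * PhiMat N α y)) x +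
            ((1 / 2 : ℂ) * ((x : ℂ) ^ 2 - 1)) • (F x * PhiMat N α x) +
            (F x * PhiMat N α x) * Jmat N) :=
  hermite_conjugation_identities_general N α hα
end
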